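/- arXiv:math/0702538 — 4 statements merged into one kernel-verified Lean document; each statement's English description precedes it below -/
import Mathlib

section
/- If two Banach spaces X and Y both have the weak Banach-Saks property, then their product X × Y (with the sup norm) also has the weak Banach-Saks property. -/
open Filter MeasureTheory Topology

/-- A normed space has the Banach-Saks property if every bounded sequence has a
subsequence whose Cesàro means converge in norm. -/
def HasBanachSaks (X : Type*) [NormedAddCommGroup X] [NormedSpace ℝ X] : Prop :=
  ∀ x : ℕ → X, (∃ C : ℝ, ∀ n, ‖x n‖ ≤ C) →
    ∃ φ : ℕ → ℕ, StrictMono φ ∧ ∃ y : X,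
      Tendsto (fun k : ℕ => (k : ℝ)⁻¹ • ∑ j ∈ Finset.range k, x (φ j)) atTop (𝓝 y)

/-- Weak convergence of a sequence: convergence under every continuous linear functional. -/
def WeakConvTo {X : Type*} [NormedAddCommGroup X] [NormedSpace ℝ X]
    (x : ℕ → X) (u : X) : Prop :=
  ∀ f : X →L[ℝ] ℝ, Tendsto (fun n => f (x n)) atTop (𝓝 (f u))

/-- A normed space has the weak Banach-Saks property if every weakly convergent
sequence has a subsequence whose Cesàro means converge in norm. -/
def HasWeakBanachSaks (X : Type*) [NormedAddCommGroup X] [NormedSpace ℝ X] : Prop :=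
  ∀ x : ℕ → X, ∀ u : X, WeakConvTo x u →
    ∃ φ : ℕ → ℕ, StrictMono φ ∧ ∃ y : X,
      Tendsto (fun k : ℕ => (k : ℝ)⁻¹ • ∑ j ∈ Finset.range k, x (φ j)) atTop (𝓝 y)

/-!
Weak convergence passes to the coordinates, so it suffices to find one subsequence whose Cesàro
means converge in both factors. This follows from an Erdős–Magidor type fact: in a space with the
weak Banach–Saks property every weakly convergent sequence has a subsequence all of whose further
subsequences have Cesàro means converging to the weak limit. Pass to such a subsequence in `X`,
then to a Cesàro-convergent subsequence of it in `Y`.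

For the fact, let `a` be weakly null and colour the `t`-element sets `F` of indices by whether
`‖∑ k ∈ F, a k‖ ≤ t * ε`. If some infinite set contained no infinite set good for any `t`, then
by infinite Ramsey each of its infinite subsets would contain one bad for `t`, and a diagonal
argument would give a subsequence whose far-out `t`-sets are bad for every `t`; but along a
Cesàro-null further subsequence the block of indices `[t, 2t)` has small sum. Diagonalising over
`ε = 1 / (j + 1)` then yields a subsequence whose far-out `t`-blocks have small averages, and
every further subsequence of it is Cesàro null.
-/

def ForallSubsetsOfCard (T : Set ℕ) (r : ℕ) (q : Finset ℕ → Prop) : Prop :=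
  ∀ F : Finset ℕ, ↑F ⊆ T → F.card = r → q F

lemma ForallSubsetsOfCard.anti {S T : Set ℕ} {r : ℕ} {q : Finset ℕ → Prop}
    (h : ForallSubsetsOfCard T r q) (hST : S ⊆ T) : ForallSubsetsOfCard S r q :=
  fun F hF => h F (hF.trans hST)

lemma exists_antitone_infinite_seq {S : Set ℕ} (hS : S.Infinite)
    {R : ℕ → Set ℕ → Set ℕ → Prop}
    (hR : ∀ n V, V ⊆ S → V.Infinite → ∃ W ⊆ V \ {sInf V}, W.Infinite ∧ R n V W) :
    ∃ V : ℕ → Set ℕ, V 0 = S ∧ Antitone V ∧ StrictMono (fun n => sInf (V n)) ∧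
      (∀ n, sInf (V n) ∈ V n) ∧ ∀ n, R n (V n) (V (n + 1)) := by
  choose! W hWsub hWinf hWR using hR
  let V : ℕ → Set ℕ := fun n => Nat.rec S (fun n V => W n V) n
  have hV : ∀ n, V n ⊆ S ∧ (V n).Infinite := by
    intro n
    induction n with
    | zero => exact ⟨subset_rfl, hS⟩
    | succ n ih =>
      exact ⟨(hWsub n _ ih.1 ih.2).trans (Set.sdiff_subset.trans ih.1), hWinf n _ ih.1 ih.2⟩
  have hstep (n : ℕ) : V (n + 1) ⊆ V n \ {sInf (V n)} := hWsub n _ (hV n).1 (hV n).2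
  have hmem (n : ℕ) : sInf (V n) ∈ V n := Nat.sInf_mem (hV n).2.nonempty
  refine ⟨V, rfl, antitone_nat_of_succ_le fun n => (hstep n).trans Set.sdiff_subset,
    strictMono_nat_of_lt_succ fun n => ?_, hmem, fun n => hWR n _ (hV n).1 (hV n).2⟩
  obtain ⟨hmem', hne⟩ := hstep n (hmem (n + 1))
  exact (Nat.sInf_le hmem').lt_of_ne (Ne.symm hne)

lemma forallSubsetsOfCard_succ_image {r : ℕ} {q : Finset ℕ → Prop} {a : ℕ → ℕ}
    (ha : StrictMono a) {V : ℕ → Set ℕ} (hV : Antitone V) (haV : ∀ n, a n ∈ V n)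
    {I : Set ℕ} (hI : ∀ n ∈ I, ForallSubsetsOfCard (V (n + 1)) r (fun F => q (insert (a n) F))) :
    ForallSubsetsOfCard (a '' I) (r + 1) q := by
  intro F hFI hF
  have hne : F.Nonempty := Finset.card_pos.mp (by omega)
  obtain ⟨i, hi, hai⟩ := hFI (F.min'_mem hne)
  have hmin : a i ∈ F := hai ▸ F.min'_mem hne
  have herase : ↑(F.erase (a i)) ⊆ V (i + 1) := by
    intro x hx
    rw [Finset.coe_erase] at hx
    obtain ⟨j, -, rfl⟩ := hFI hx.1
    have hij : a i < a j := (hai.trans_le (F.min'_le _ hx.1)).lt_of_ne' hx.2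
    exact hV (ha.lt_iff_lt.mp hij) (haV j)
  simpa only [Finset.insert_erase hmin] using
    hI i hi _ herase (by rw [Finset.card_erase_of_mem hmin, hF, Nat.add_sub_cancel])

theorem infinite_ramsey (r : ℕ) (p : Finset ℕ → Prop) {S : Set ℕ} (hS : S.Infinite) :
    ∃ T ⊆ S, T.Infinite ∧
      (ForallSubsetsOfCard T r p ∨ ForallSubsetsOfCard T r (fun F => ¬ p F)) := by
  induction r generalizing p S with
  | zero =>
    refine ⟨S, subset_rfl, hS, ?_⟩
    by_cases hp : p ∅
    · exact Or.inl fun F _ hF => Finset.card_eq_zero.mp hF ▸ hp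
    · exact Or.inr fun F _ hF => Finset.card_eq_zero.mp hF ▸ hp
  | succ r ih =>
    obtain ⟨V, hV0, hV, ha, haV, hVR⟩ := exists_antitone_infinite_seq hS
      (fun _ V _ hV => ih (fun F => p (insert (sInf V) F)) (hV.sdiff (Set.finite_singleton _)))
    set a := fun n => sInf (V n)
    have haS (I : Set ℕ) : a '' I ⊆ S := by
      rintro _ ⟨n, -, rfl⟩
      exact hV0 ▸ hV (Nat.zero_le n) (haV n)
    let I := {n | ForallSubsetsOfCard (V (n + 1)) r (fun F => p (insert (a n) F))}
    rcases I.finite_or_infinite with hI | hI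
    · refine ⟨a '' Iᶜ, haS _, hI.infinite_compl.image ha.injective.injOn, Or.inr ?_⟩
      exact forallSubsetsOfCard_succ_image ha hV haV fun n hn => (hVR n).resolve_left hn
    · exact ⟨a '' I, haS _, hI.image ha.injective.injOn,
        Or.inl (forallSubsetsOfCard_succ_image ha hV haV fun n hn => hn)⟩

lemma exists_strictMono_forall_image_Ici {S : Set ℕ} (hS : S.Infinite)
    {P : ℕ → Set ℕ → Prop} (hex : ∀ n V, V ⊆ S → V.Infinite → ∃ W ⊆ V, W.Infinite ∧ P n W)
    (hP : ∀ n, Antitone (P n)) :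
    ∃ d : ℕ → ℕ, StrictMono d ∧ ∀ n, P n (d '' Set.Ici n) := by
  obtain ⟨V, -, hV, hd, hdV, hPV⟩ := exists_antitone_infinite_seq hS (R := fun n _ W => P n W)
    fun n V hVS hV => hex n _ (Set.sdiff_subset.trans hVS) (hV.sdiff (Set.finite_singleton _))
  refine ⟨fun n => sInf (V (n + 1)), hd.comp (strictMono_id.add_const 1), fun n => ?_⟩
  refine hP n ?_ (hPV n)
  rintro _ ⟨m, hm, rfl⟩
  exact hV (Nat.succ_le_succ hm) (hdV (m + 1))

lemma ForallSubsetsOfCard.apply_sum_window {M : Type*} [AddCommMonoid M] {P : M → Prop}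
    {a : ℕ → M} {d h : ℕ → ℕ} {n t m : ℕ}
    (H : ForallSubsetsOfCard (d '' Set.Ici n) t (fun F => P (∑ k ∈ F, a k)))
    (hd : StrictMono d) (hh : StrictMono h) (hm : n ≤ m) :
    P (∑ i ∈ Finset.range t, a (d (h (m + i)))) := by
  have hinj : Function.Injective fun i => d (h (m + i)) :=
    hd.injective.comp (hh.injective.comp (add_right_injective m))
  have hsub : ↑((Finset.range t).image fun i => d (h (m + i))) ⊆ d '' Set.Ici n := by
    simp only [Finset.coe_image]
    rintro _ ⟨i, -, rfl⟩
    exact ⟨h (m + i), hm.trans ((Nat.le_add_right m i).trans hh.le_apply), rfl⟩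
  simpa [Finset.sum_image fun i _ j _ hij => hinj hij] using
    H _ hsub (by rw [Finset.card_image_of_injective _ hinj, Finset.card_range])

section Cesaro

variable {E : Type*} [NormedAddCommGroup E]

lemma exists_norm_sum_range_le_of_blocks {v : ℕ → E} {ε : ℝ} (hε : 0 ≤ ε) {t s : ℕ}
    (ht : 0 < t) (hblock : ∀ m ≥ s, ‖∑ i ∈ Finset.range t, v (m + i)‖ ≤ t * ε) :
    ∃ M, ∀ k, ‖∑ i ∈ Finset.range k, v i‖ ≤ k * ε + M := by
  set M := ∑ k ∈ Finset.range (s + t), ‖∑ i ∈ Finset.range k, v i‖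
  refine ⟨M, fun k => ?_⟩
  induction k using Nat.strong_induction_on with
  | _ k ih =>
    by_cases hk : k < s + t
    · have : ‖∑ i ∈ Finset.range k, v i‖ ≤ M :=
        Finset.single_le_sum (f := fun k => ‖∑ i ∈ Finset.range k, v i‖)
          (fun _ _ => norm_nonneg _) (Finset.mem_range.mpr hk)
      have hkε : 0 ≤ (k : ℝ) * ε := mul_nonneg k.cast_nonneg hε
      linarith
    · obtain ⟨m, rfl⟩ : ∃ m, k = m + t := ⟨k - t, by omega⟩
      rw [Finset.sum_range_add]
      calc ‖∑ i ∈ Finset.range m, v i + ∑ i ∈ Finset.range t, v (m + i)‖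
          ≤ (m * ε + M) + t * ε := (norm_add_le _ _).trans
            (add_le_add (ih m (by omega)) (hblock m (by omega)))
        _ = ((m + t : ℕ) : ℝ) * ε + M := by push_cast; ring

variable [NormedSpace ℝ E]

noncomputable def cesaroMean (v : ℕ → E) (k : ℕ) : E := (k : ℝ)⁻¹ • ∑ i ∈ Finset.range k, v i

lemma natCast_smul_cesaroMean (v : ℕ → E) (k : ℕ) :
    (k : ℝ) • cesaroMean v k = ∑ i ∈ Finset.range k, v i := by
  rcases eq_or_ne k 0 with rfl | hk
  · simp
  · exact smul_inv_smul₀ (Nat.cast_ne_zero.mpr hk) _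

lemma norm_cesaroMean (v : ℕ → E) (k : ℕ) :
    ‖cesaroMean v k‖ = ‖∑ i ∈ Finset.range k, v i‖ / k := by
  simp [cesaroMean, norm_smul, div_eq_inv_mul]

lemma cesaroMean_sub_const (v : ℕ → E) (c : E) {k : ℕ} (hk : k ≠ 0) :
    cesaroMean (fun n => v n - c) k = cesaroMean v k - c := by
  have hk' : (k : ℝ) ≠ 0 := Nat.cast_ne_zero.mpr hk
  simp [cesaroMean, Finset.sum_sub_distrib, smul_sub, ← Nat.cast_smul_eq_nsmul ℝ, smul_smul,
    inv_mul_cancel₀ hk']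

lemma tendsto_cesaroMean_of_sub {v : ℕ → E} {c : E}
    (h : Tendsto (cesaroMean fun n => v n - c) atTop (𝓝 0)) :
    Tendsto (cesaroMean v) atTop (𝓝 c) := by
  refine (zero_add c ▸ h.add_const c).congr' ?_
  filter_upwards [eventually_ne_atTop 0] with k hk
  rw [cesaroMean_sub_const v c hk, sub_add_cancel]

lemma ContinuousLinearMap.map_cesaroMean {F : Type*} [NormedAddCommGroup F] [NormedSpace ℝ F]
    (L : E →L[ℝ] F) (v : ℕ → E) (k : ℕ) : L (cesaroMean v k) = cesaroMean (L ∘ v) k := by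
  simp [cesaroMean, map_sum]

lemma tendsto_cesaroMean_zero_of_blocks {v : ℕ → E}
    (h : ∀ ε > 0, ∃ t > 0, ∃ s, ∀ m ≥ s, ‖∑ i ∈ Finset.range t, v (m + i)‖ ≤ t * ε) :
    Tendsto (cesaroMean v) atTop (𝓝 0) := by
  refine Metric.tendsto_nhds.mpr fun ε hε => ?_
  obtain ⟨t, ht, s, hblock⟩ := h (ε / 2) (half_pos hε)
  obtain ⟨M, hM⟩ := exists_norm_sum_range_le_of_blocks (half_pos hε).le ht hblock
  filter_upwards [eventually_gt_atTop 0,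
    (tendsto_const_div_atTop_nhds_zero_nat M).eventually (gt_mem_nhds (half_pos hε))]
    with k hk hMk
  have hk' : (0 : ℝ) < k := Nat.cast_pos.mpr hk
  rw [dist_zero_right, norm_cesaroMean, div_lt_iff₀ hk']
  calc ‖∑ i ∈ Finset.range k, v i‖ ≤ k * (ε / 2) + M := hM k
    _ < k * (ε / 2) + k * (ε / 2) := by gcongr; rwa [div_lt_iff₀ hk', mul_comm] at hMk
    _ = ε * k := by ring

lemma eventually_norm_sum_range_add_le {v : ℕ → E} (hv : Tendsto (cesaroMean v) atTop (𝓝 0))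
    {ε : ℝ} (hε : 0 < ε) : ∀ᶠ m in atTop, ‖∑ i ∈ Finset.range m, v (m + i)‖ ≤ m * ε := by
  obtain ⟨N, hN⟩ := eventually_atTop.mp
    (hv.norm.eventually (ge_mem_nhds (by rw [norm_zero]; positivity : ‖(0 : E)‖ < ε / 3)))
  filter_upwards [eventually_ge_atTop N] with m hm
  have hsum : ∑ i ∈ Finset.range m, v (m + i) =
      ((m + m : ℕ) : ℝ) • cesaroMean v (m + m) - (m : ℝ) • cesaroMean v m := by
    rw [natCast_smul_cesaroMean, natCast_smul_cesaroMean, Finset.sum_range_add,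
      add_sub_cancel_left]
  have h1 := hN (m + m) (by omega)
  have h2 := hN m hm
  rw [hsum]
  calc _ ≤ ‖((m + m : ℕ) : ℝ) • cesaroMean v (m + m)‖ + ‖(m : ℝ) • cesaroMean v m‖ :=
        norm_sub_le _ _
    _ ≤ ((m + m : ℕ) : ℝ) * (ε / 3) + m * (ε / 3) := by
        simp only [norm_smul, Real.norm_natCast]
        gcongr
    _ = m * ε := by push_cast; ring

end Cesaro

section WeakBanachSaks

variable {X : Type*} [NormedAddCommGroup X] [NormedSpace ℝ X]

lemma WeakConvTo.comp {x : ℕ → X} {u : X} (hx : WeakConvTo x u) {φ : ℕ → ℕ}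
    (hφ : StrictMono φ) : WeakConvTo (x ∘ φ) u :=
  fun f => (hx f).comp hφ.tendsto_atTop

lemma WeakConvTo.map {Y : Type*} [NormedAddCommGroup Y] [NormedSpace ℝ Y] {x : ℕ → X} {u : X}
    (hx : WeakConvTo x u) (L : X →L[ℝ] Y) : WeakConvTo (L ∘ x) (L u) :=
  fun f => hx (f.comp L)

lemma WeakConvTo.sub_const {x : ℕ → X} {u : X} (hx : WeakConvTo x u) :
    WeakConvTo (fun n => x n - u) 0 := fun f => by
  simpa using (hx f).sub_const (f u)

lemma WeakConvTo.eq_of_tendsto_cesaroMean {x : ℕ → X} {u y : X} (hx : WeakConvTo x u)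
    (hy : Tendsto (cesaroMean x) atTop (𝓝 y)) : y = u := by
  refine (SeparatingDual.eq_iff_forall_dual_eq (R := ℝ)).mpr fun f => ?_
  have hfy : Tendsto (cesaroMean (f ∘ x)) atTop (𝓝 (f y)) :=
    ((f.continuous.tendsto y).comp hy).congr fun k => f.map_cesaroMean x k
  exact tendsto_nhds_unique hfy (hx f).cesaro_smul

lemma HasWeakBanachSaks.exists_tendsto_cesaroMean (hX : HasWeakBanachSaks X) {x : ℕ → X} {u : X}
    (hx : WeakConvTo x u) :
    ∃ φ : ℕ → ℕ, StrictMono φ ∧ Tendsto (cesaroMean (x ∘ φ)) atTop (𝓝 u) := by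
  obtain ⟨φ, hφ, y, hy⟩ := hX x u hx
  exact ⟨φ, hφ, (hx.comp hφ).eq_of_tendsto_cesaroMean hy ▸ hy⟩

lemma HasWeakBanachSaks.exists_forallSubsetsOfCard_norm_sum_le (hX : HasWeakBanachSaks X)
    {a : ℕ → X} (ha : WeakConvTo a 0) {ε : ℝ} (hε : 0 < ε) {S : Set ℕ} (hS : S.Infinite) :
    ∃ t > 0, ∃ T ⊆ S, T.Infinite ∧
      ForallSubsetsOfCard T t (fun F => ‖∑ k ∈ F, a k‖ ≤ t * ε) := by
  by_contra! hno_good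
  have hbad (n : ℕ) (V : Set ℕ) (hVS : V ⊆ S) (hV : V.Infinite) : ∃ W ⊆ V, W.Infinite ∧
      ForallSubsetsOfCard W (n + 1) (fun F => ¬ ‖∑ k ∈ F, a k‖ ≤ ((n + 1 : ℕ) : ℝ) * ε) := by
    obtain ⟨W, hWV, hW, hWgood | hWbad⟩ := infinite_ramsey (n + 1) _ hV
    · exact absurd hWgood (hno_good (n + 1) n.succ_pos W (hWV.trans hVS) hW)
    · exact ⟨W, hWV, hW, hWbad⟩
  obtain ⟨d, hd, hdiag⟩ := exists_strictMono_forall_image_Ici hS hbad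
    fun _ _ _ hWW' hW' => hW'.anti hWW'
  obtain ⟨g, hg, hmean⟩ := hX.exists_tendsto_cesaroMean (ha.comp hd)
  obtain ⟨m, hm, hm0⟩ :=
    ((eventually_norm_sum_range_add_le hmean hε).and (eventually_ne_atTop 0)).exists
  obtain ⟨n, rfl⟩ : ∃ n, m = n + 1 := ⟨m - 1, by omega⟩
  exact (hdiag n).apply_sum_window (P := fun x => ¬ ‖x‖ ≤ ((n + 1 : ℕ) : ℝ) * ε) hd hg
    n.le_succ hm

lemma HasWeakBanachSaks.exists_strictMono_forall_tendsto_cesaroMean_zero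
    (hX : HasWeakBanachSaks X) {a : ℕ → X} (ha : WeakConvTo a 0) :
    ∃ d : ℕ → ℕ, StrictMono d ∧
      ∀ h : ℕ → ℕ, StrictMono h → Tendsto (cesaroMean (a ∘ d ∘ h)) atTop (𝓝 0) := by
  obtain ⟨d, hd, hdiag⟩ := exists_strictMono_forall_image_Ici Set.infinite_univ
    (P := fun j W => ∃ t > 0,
      ForallSubsetsOfCard W t (fun F => ‖∑ k ∈ F, a k‖ ≤ t * (1 / ((j : ℝ) + 1))))
    (fun j V _ hV => by
      obtain ⟨t, ht, T, hTV, hT, hTgood⟩ :=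
        hX.exists_forallSubsetsOfCard_norm_sum_le ha Nat.one_div_pos_of_nat hV
      exact ⟨T, hTV, hT, t, ht, hTgood⟩)
    fun _ _ _ hWW' ⟨t, ht, hW'⟩ => ⟨t, ht, hW'.anti hWW'⟩
  refine ⟨d, hd, fun h hh => tendsto_cesaroMean_zero_of_blocks fun ε hε => ?_⟩
  obtain ⟨j, hj⟩ := exists_nat_one_div_lt hε
  obtain ⟨t, ht, hgood⟩ := hdiag j
  refine ⟨t, ht, j, fun m hm => ?_⟩
  exact (hgood.apply_sum_window (P := fun x => ‖x‖ ≤ t * (1 / ((j : ℝ) + 1))) hd hh hm).trans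
    (by gcongr)

theorem HasWeakBanachSaks.exists_strictMono_forall_tendsto_cesaroMean
    (hX : HasWeakBanachSaks X) {a : ℕ → X} {u : X} (ha : WeakConvTo a u) :
    ∃ d : ℕ → ℕ, StrictMono d ∧
      ∀ h : ℕ → ℕ, StrictMono h → Tendsto (cesaroMean (a ∘ d ∘ h)) atTop (𝓝 u) := by
  obtain ⟨d, hd, hnull⟩ := hX.exists_strictMono_forall_tendsto_cesaroMean_zero ha.sub_const
  exact ⟨d, hd, fun h hh => tendsto_cesaroMean_of_sub (hnull h hh)⟩

end WeakBanachSaks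

theorem weakBanachSaks_prod_general (X Y : Type*)
    [NormedAddCommGroup X] [NormedSpace ℝ X]
    [NormedAddCommGroup Y] [NormedSpace ℝ Y]
    (hX : HasWeakBanachSaks X) (hY : HasWeakBanachSaks Y) :
    HasWeakBanachSaks (X × Y) := by
  intro z u hz
  obtain ⟨d, hd, hfst⟩ :=
    hX.exists_strictMono_forall_tendsto_cesaroMean (hz.map (ContinuousLinearMap.fst ℝ X Y))
  obtain ⟨g, hg, hsnd⟩ :=
    hY.exists_tendsto_cesaroMean ((hz.map (ContinuousLinearMap.snd ℝ X Y)).comp hd)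
  refine ⟨d ∘ g, hd.comp hg, u, (Prod.tendsto_iff (cesaroMean (z ∘ d ∘ g)) u).mpr ⟨?_, ?_⟩⟩
  · exact (hfst g hg).congr fun k => ((ContinuousLinearMap.fst ℝ X Y).map_cesaroMean _ k).symm
  · exact hsnd.congr fun k => ((ContinuousLinearMap.snd ℝ X Y).map_cesaroMean _ k).symm

theorem weakBanachSaks_prod (X Y : Type*)
    [NormedAddCommGroup X] [NormedSpace ℝ X] [CompleteSpace X]
    [NormedAddCommGroup Y] [NormedSpace ℝ Y] [CompleteSpace Y]
    (hX : HasWeakBanachSaks X) (hY : HasWeakBanachSaks Y) :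
    HasWeakBanachSaks (X × Y) :=
  weakBanachSaks_prod_general X Y hX hY
end

section
/- A Banach space X has the Banach-Saks property if and only if X is reflexive and has the weak Banach-Saks property. -/
open Filter MeasureTheory Topology

/-!
Banach–Saks implies weak Banach–Saks because weakly convergent sequences are bounded (uniform
boundedness). It also forces reflexivity: otherwise some `F` in the bidual lies at distance `≥ 1`
from `X`, and Helly's theorem (finitely many linear conditions satisfiable in the bidual are
satisfiable in `X` at almost the same norm) builds, one pair at a time, bounded `fᵢ ∈ X*` and
`xⱼ ∈ X` with `fᵢ xⱼ = 1` for `i ≤ j` and `0` for `j < i` (James). A norm limit `y` of Cesàro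
means of a subsequence of `x` would have `fᵢ y = 1` for every `i`, while `fᵢ` vanishes on the
`k`-th mean once `i` is large, which the bound on `‖fᵢ‖` forbids.

Conversely, in a reflexive space a bounded sequence has a weak limit along every ultrafilter
(Banach–Alaoglu in the bidual). Countably many functionals separate the points of the separable
closed span of the sequence; along a diagonal subsequence on which they all converge, every
ultrafilter limit is the same point, so that subsequence converges weakly and the weak Banach–Saks
property applies to it.
-/

open Metric NormedSpace

theorem ContinuousLinearMap.closure_image_closedBall_subset {𝕜 E F : Type*}
    [NontriviallyNormedField 𝕜] [CompleteSpace 𝕜] [NormedAddCommGroup E] [NormedSpace 𝕜 E]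
    [NormedAddCommGroup F] [NormedSpace 𝕜 F] [FiniteDimensional 𝕜 F] (T : E →L[𝕜] F) (r : ℝ)
    {ε : ℝ} (hε : 0 < ε) : closure (T '' closedBall 0 r) ⊆ T '' closedBall 0 (r + ε) := by
  intro y hy
  set V := LinearMap.range T.toLinearMap
  have hyV : y ∈ V := by
    have hV : IsClosed (V : Set F) := V.closed_of_finiteDimensional
    refine closure_minimal ?_ hV hy
    rintro _ ⟨x, -, rfl⟩
    exact LinearMap.mem_range_self _ x
  -- `T` is open onto its range, so a small defect `y - T x` is the image of a small vector
  have hopen : IsOpen (T.toLinearMap.rangeRestrict '' ball 0 ε) :=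
    T.toLinearMap.rangeRestrict.isOpenMap_of_finiteDimensional
      T.toLinearMap.surjective_rangeRestrict _ isOpen_ball
  obtain ⟨δ, hδ, hball⟩ := Metric.isOpen_iff.1 hopen 0 ⟨0, mem_ball_self hε, map_zero _⟩
  obtain ⟨_, ⟨x, hx, rfl⟩, hxy⟩ := Metric.mem_closure_iff.1 hy δ hδ
  obtain ⟨z, hz, hzT⟩ := hball (a := ⟨y - T x, V.sub_mem hyV (LinearMap.mem_range_self _ x)⟩)
    (by simpa [dist_eq_norm] using hxy)
  refine ⟨x + z, ?_, ?_⟩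
  · rw [mem_closedBall_zero_iff] at hx ⊢
    rw [mem_ball_zero_iff] at hz
    linarith [norm_add_le x z]
  · have hTz : T z = y - T x := congrArg Subtype.val hzT
    rw [map_add, hTz, add_sub_cancel]

section Helly

variable {E : Type*} [NormedAddCommGroup E] [NormedSpace ℝ E]

theorem mem_closure_image_closedBall_of_abs_sum_le {ι : Type*} [Fintype ι]
    (G : ι → StrongDual ℝ E) (c : ι → ℝ) {M r : ℝ} (hMr : M ≤ r) (hr : 0 < r)
    (h : ∀ a : ι → ℝ, |∑ i, a i * c i| ≤ M * ‖∑ i, a i • G i‖) :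
    c ∈ closure (ContinuousLinearMap.pi G '' closedBall 0 r) := by
  classical
  -- separating `c` from the image gives `a` with `∑ aᵢ cᵢ < u < (∑ aᵢ Gᵢ) x` on the ball;
  -- by symmetry of the ball `r * ‖∑ aᵢ Gᵢ‖ ≤ -u`, against `h a`
  by_contra hc
  obtain ⟨φ, u, hφc, hφK⟩ := geometric_hahn_banach_point_closed
    ((convex_closedBall 0 r).linear_image (ContinuousLinearMap.pi G).toLinearMap).closure
    isClosed_closure hc
  set a : ι → ℝ := fun i => φ fun j => if i = j then 1 else 0
  have hφ : ∀ y, φ y = ∑ i, a i * y i := fun y => by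
    simpa [a, mul_comm] using LinearMap.pi_apply_eq_sum_univ φ.toLinearMap y
  set g := ∑ i, a i • G i
  have hgx : ∀ x ∈ closedBall (0 : E) r, u < g x := fun x hx => by
    simpa [g, hφ] using hφK _ (subset_closure ⟨x, hx, rfl⟩)
  have hu : u < 0 := by simpa using hgx 0 (mem_closedBall_self hr.le)
  have hg : ‖g‖ ≤ -u / r := g.opNorm_bound_of_ball_bound hr _ fun x hx => by
    have := hgx (-x) (by simpa using hx)
    rw [Real.norm_eq_abs, abs_le]
    constructor <;> linarith [hgx x hx, map_neg g x]
  have hsum : ∑ i, a i * c i < u := by rwa [← hφ]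
  have : |∑ i, a i * c i| ≤ -u := calc
    _ ≤ M * ‖g‖ := h a
    _ ≤ r * (-u / r) := mul_le_mul hMr hg (norm_nonneg g) hr.le
    _ = -u := by field_simp
  linarith [neg_abs_le (∑ i, a i * c i)]

theorem exists_norm_le_forall_apply_eq_of_abs_sum_le {ι : Type*} [Fintype ι]
    (G : ι → StrongDual ℝ E) (c : ι → ℝ) {M ε : ℝ} (hM : 0 ≤ M) (hε : 0 < ε)
    (h : ∀ a : ι → ℝ, |∑ i, a i * c i| ≤ M * ‖∑ i, a i • G i‖) :
    ∃ x : E, ‖x‖ ≤ M + ε ∧ ∀ i, G i x = c i := by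
  have hc := mem_closure_image_closedBall_of_abs_sum_le G c
    (le_add_of_nonneg_right (half_pos hε).le) (by positivity) h
  obtain ⟨x, hx, hxc⟩ :=
    (ContinuousLinearMap.pi G).closure_image_closedBall_subset _ (half_pos hε) hc
  refine ⟨x, ?_, fun i => congrFun hxc i⟩
  rwa [mem_closedBall_zero_iff, add_assoc, add_halves] at hx

theorem exists_norm_le_forall_apply_eq_bidual {ι : Type*} [Fintype ι]
    (G : ι → StrongDual ℝ E) (F : StrongDual ℝ (StrongDual ℝ E)) {ε : ℝ} (hε : 0 < ε) :
    ∃ x : E, ‖x‖ ≤ ‖F‖ + ε ∧ ∀ i, G i x = F (G i) :=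
  exists_norm_le_forall_apply_eq_of_abs_sum_le G _ (norm_nonneg F) hε fun a => by
    simpa [map_sum, mul_comm] using F.le_opNorm (∑ i, a i • G i)

end Helly

section James

variable {X : Type*} [NormedAddCommGroup X] [NormedSpace ℝ X]
  {F : StrongDual ℝ (StrongDual ℝ X)} (hF : ∀ x : X, 1 ≤ ‖F - inclusionInDoubleDual ℝ X x‖)
include hF

theorem abs_le_norm_smul_sub_inclusionInDoubleDual (t : ℝ) (y : X) :
    |t| ≤ ‖t • F - inclusionInDoubleDual ℝ X y‖ := by
  rcases eq_or_ne t 0 with rfl | ht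
  · rw [abs_zero]
    exact norm_nonneg (0 • F - inclusionInDoubleDual ℝ X y)
  calc |t| ≤ |t| * ‖F - inclusionInDoubleDual ℝ X (t⁻¹ • y)‖ :=
        le_mul_of_one_le_right (abs_nonneg t) (hF _)
    _ = ‖t • (F - inclusionInDoubleDual ℝ X (t⁻¹ • y))‖ := by
        rw [@norm_smul ℝ (StrongDual ℝ (StrongDual ℝ X)) _ _ _ NormedSpace.toNormSMulClass,
          Real.norm_eq_abs]
    _ = ‖t • F - inclusionInDoubleDual ℝ X y‖ := by
        rw [smul_sub t F, ← map_smul, smul_inv_smul₀ ht]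

theorem exists_norm_le_two_apply_eq_one_forall_apply_eq_zero (s : Finset X) :
    ∃ f : StrongDual ℝ X, ‖f‖ ≤ 2 ∧ F f = 1 ∧ ∀ x ∈ s, f x = 0 := by
  let G : Option s → StrongDual ℝ (StrongDual ℝ X) :=
    fun o => o.elim F fun x => inclusionInDoubleDual ℝ X x
  let c : Option s → ℝ := fun o => o.elim 1 0
  obtain ⟨f, hf, hfG⟩ :=
    exists_norm_le_forall_apply_eq_of_abs_sum_le G c zero_le_one one_pos fun a => by
      have hc : ∑ o, a o * c o = a none := by simp [c, Fintype.sum_option]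
      have hG : ∑ o, a o • G o =
          a none • F - inclusionInDoubleDual ℝ X (-∑ x : s, a (some x) • (x : X)) := by
        simp only [G, Fintype.sum_option, Option.elim, map_neg, map_sum, map_smul, sub_neg_eq_add]
      rw [hc, hG, one_mul]
      exact abs_le_norm_smul_sub_inclusionInDoubleDual hF (a none) _
  refine ⟨f, by norm_num at hf; linarith, by simpa [G, c] using hfG none, fun x hx => ?_⟩
  simpa [G, c] using hfG (some ⟨x, hx⟩)

theorem exists_seq_apply_eq_ite_of_forall_one_le_norm_sub :
    ∃ (f : ℕ → StrongDual ℝ X) (x : ℕ → X), (∀ n, ‖f n‖ ≤ 2) ∧ (∀ n, ‖x n‖ ≤ ‖F‖ + 1) ∧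
      ∀ i j, f i (x j) = if i ≤ j then 1 else 0 := by
  classical
  obtain ⟨p, hP, hr⟩ := exists_seq_of_forall_finset_exists
    (fun p : StrongDual ℝ X × X => ‖p.1‖ ≤ 2 ∧ ‖p.2‖ ≤ ‖F‖ + 1 ∧ F p.1 = 1 ∧ p.1 p.2 = 1)
    (fun p q => q.1 p.2 = 0 ∧ p.1 q.2 = 1) fun s hs => by
      obtain ⟨g, hg, hFg, hgs⟩ :=
        exists_norm_le_two_apply_eq_one_forall_apply_eq_zero hF (s.image Prod.snd)
      let t := insert g (s.image Prod.fst)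
      obtain ⟨y, hy, hty⟩ :=
        exists_norm_le_forall_apply_eq_bidual (fun f : t => (f : StrongDual ℝ X)) F one_pos
      have hFt : ∀ f ∈ t, f y = 1 := by
        intro f hf
        rw [hty ⟨f, hf⟩]
        rcases Finset.mem_insert.1 hf with rfl | hf
        · exact hFg
        · obtain ⟨q, hq, rfl⟩ := Finset.mem_image.1 hf
          exact (hs q hq).2.2.1
      exact ⟨(g, y), ⟨hg, hy, hFg, hFt g (Finset.mem_insert_self _ _)⟩, fun q hq =>
        ⟨hgs _ (Finset.mem_image_of_mem _ hq),
          hFt _ (Finset.mem_insert_of_mem (Finset.mem_image_of_mem _ hq))⟩⟩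
  refine ⟨fun n => (p n).1, fun n => (p n).2, fun n => (hP n).1, fun n => (hP n).2.1,
    fun i j => ?_⟩
  rcases lt_trichotomy i j with h | rfl | h
  · simp [h.le, (hr i j h).2]
  · simp [(hP i).2.2.2]
  · simp [h.not_ge, (hr j i h).1]

end James

section BanachSaks

variable {X : Type*} [NormedAddCommGroup X] [NormedSpace ℝ X]

theorem not_tendsto_cesaro_of_apply_eq_ite {f : ℕ → StrongDual ℝ X} {x : ℕ → X} {C : ℝ}
    (hf : ∀ i, ‖f i‖ ≤ C) (hfx : ∀ i j, f i (x j) = if i ≤ j then 1 else 0) {φ : ℕ → ℕ}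
    (hφ : StrictMono φ) (y : X) :
    ¬ Tendsto (fun k : ℕ => (k : ℝ)⁻¹ • ∑ j ∈ Finset.range k, x (φ j)) atTop (𝓝 y) := by
  intro hy
  set σ := fun k : ℕ => (k : ℝ)⁻¹ • ∑ j ∈ Finset.range k, x (φ j)
  have hfσ : ∀ i k, f i (σ k) = (k : ℝ)⁻¹ * ∑ j ∈ Finset.range k, f i (x (φ j)) := by
    simp [σ, map_sum]
  have hfy : ∀ i, f i y = 1 := fun i => by
    refine tendsto_nhds_unique (((f i).continuous.tendsto y).comp hy) ?_
    simp only [Function.comp_def, hfσ]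
    refine Tendsto.cesaro (tendsto_const_nhds.congr' ?_)
    filter_upwards [eventually_ge_atTop i] with j hj
    rw [hfx, if_pos (hj.trans (hφ.id_le j))]
  have hsmall : ∀ᶠ k in atTop, C * ‖σ k - y‖ < 1 := by
    have := (tendsto_iff_norm_sub_tendsto_zero.1 hy).const_mul C
    rw [mul_zero] at this
    exact this.eventually (gt_mem_nhds one_pos)
  obtain ⟨k, hk, hk1⟩ := (hsmall.and (eventually_ge_atTop 1)).exists
  have hσ : f (φ (k - 1) + 1) (σ k) = 0 := by
    rw [hfσ, Finset.sum_eq_zero, mul_zero]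
    intro j hj
    have : φ j ≤ φ (k - 1) := hφ.monotone (by rw [Finset.mem_range] at hj; omega)
    rw [hfx, if_neg (by omega)]
  have : 1 ≤ C * ‖σ k - y‖ := calc
    (1 : ℝ) = |f (φ (k - 1) + 1) (σ k - y)| := by rw [map_sub, hσ, hfy]; norm_num
    _ ≤ ‖f (φ (k - 1) + 1)‖ * ‖σ k - y‖ := (f _).le_opNorm _
    _ ≤ C * ‖σ k - y‖ := mul_le_mul_of_nonneg_right (hf _) (norm_nonneg _)
  linarith

theorem surjective_inclusionInDoubleDual_of_hasBanachSaks [CompleteSpace X]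
    (h : HasBanachSaks X) : Function.Surjective (inclusionInDoubleDual ℝ X) := by
  by_contra hJ
  set p : Subspace ℝ (StrongDual ℝ (StrongDual ℝ X)) :=
    LinearMap.range (inclusionInDoubleDual ℝ X).toLinearMap
  have hJ' : Isometry (inclusionInDoubleDual ℝ X) := (inclusionInDoubleDualLi ℝ).isometry
  have hclosed : IsClosed (p : Set (StrongDual ℝ (StrongDual ℝ X))) := by
    rw [LinearMap.coe_range]
    exact hJ'.isClosedEmbedding.isClosed_range
  obtain ⟨F, -, hF⟩ := riesz_lemma_of_norm_lt (E := StrongDual ℝ (StrongDual ℝ X)) (c := (2 : ℝ))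
    (R := 3) (by norm_num) (by norm_num) hclosed (by simpa [p, Function.Surjective] using hJ)
  obtain ⟨f, x, hf, hx, hfx⟩ := exists_seq_apply_eq_ite_of_forall_one_le_norm_sub (F := F)
    fun x => hF _ (LinearMap.mem_range_self _ x)
  obtain ⟨φ, hφ, y, hy⟩ := h x ⟨_, hx⟩
  exact not_tendsto_cesaro_of_apply_eq_ite hf hfx hφ y hy

theorem WeakConvTo.exists_norm_le {x : ℕ → X} {u : X} (h : WeakConvTo x u) :
    ∃ C, ∀ n, ‖x n‖ ≤ C := by
  obtain ⟨C, hC⟩ := banach_steinhaus (g := fun n => inclusionInDoubleDual ℝ X (x n)) fun f => by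
    simpa [Set.range, BddAbove, upperBounds, Set.Nonempty] using (h f).norm.bddAbove_range
  exact ⟨C, fun n => (inclusionInDoubleDualLi ℝ).norm_map (x n) ▸ hC n⟩

theorem HasBanachSaks.hasWeakBanachSaks (h : HasBanachSaks X) : HasWeakBanachSaks X :=
  fun x _ hx => h x hx.exists_norm_le

end BanachSaks

section Reflexive

variable {X : Type*} [NormedAddCommGroup X] [NormedSpace ℝ X]

theorem mem_of_forall_tendsto_apply_of_isClosed_of_convex {ι : Type*} {l : Filter ι} [l.NeBot]
    {K : Set X} (hKc : IsClosed K) (hK : Convex ℝ K) {z : ι → X} (hzK : ∀ᶠ i in l, z i ∈ K)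
    {y : X} (hy : ∀ f : StrongDual ℝ X, Tendsto (fun i => f (z i)) l (𝓝 (f y))) : y ∈ K := by
  by_contra hyK
  obtain ⟨f, u, hfy, hfK⟩ := geometric_hahn_banach_point_closed hK hKc hyK
  exact hfy.not_ge (ge_of_tendsto (hy f) (hzK.mono fun i hi => (hfK _ hi).le))

theorem exists_seq_dual_eq_zero_of_isSeparable {t : Set X} (ht : TopologicalSpace.IsSeparable t) :
    ∃ g : ℕ → StrongDual ℝ X, ∀ a ∈ t, (∀ k, g k a = 0) → a = 0 := by
  obtain ⟨d, hd, htd⟩ := ht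
  obtain ⟨u, hu⟩ := (hd.insert 0).exists_eq_range (Set.insert_nonempty 0 d)
  choose g hg1 hgu using fun k => exists_dual_vector'' ℝ (u k)
  refine ⟨g, fun a ha hga => norm_le_zero_iff.1 (not_lt.1 fun ha0 => ?_)⟩
  obtain ⟨_, ⟨k, rfl⟩, hk⟩ := Metric.mem_closure_iff.1
    (hu ▸ closure_mono (Set.subset_insert 0 d) (htd ha)) (‖a‖ / 2) (half_pos ha0)
  rw [dist_eq_norm] at hk
  have hu_le : ‖u k‖ ≤ ‖a - u k‖ := calc
    ‖u k‖ = g k (u k - a) := by rw [map_sub, hga, sub_zero, hgu]; rfl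
    _ ≤ ‖g k (u k - a)‖ := le_abs_self _
    _ ≤ 1 * ‖u k - a‖ := (g k).le_of_opNorm_le (hg1 k) _
    _ = ‖a - u k‖ := by rw [one_mul, norm_sub_rev]
  linarith [norm_le_insert' a (u k)]

variable (hJ : Function.Surjective (inclusionInDoubleDual ℝ X))
include hJ

theorem exists_forall_tendsto_apply_of_surjective_inclusionInDoubleDual {ι : Type*} {z : ι → X}
    {C : ℝ} (hz : ∀ i, ‖z i‖ ≤ C) (U : Ultrafilter ι) :
    ∃ y : X, ∀ f : StrongDual ℝ X, Tendsto (fun i => f (z i)) U (𝓝 (f y)) := by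
  let w : ι → WeakDual ℝ (StrongDual ℝ X) :=
    fun i => StrongDual.toWeakDual (inclusionInDoubleDual ℝ X (z i))
  obtain ⟨L, -, hL⟩ := (WeakDual.isCompact_closedBall (0 : StrongDual ℝ (StrongDual ℝ X)) C)
    |>.ultrafilter_le_nhds (U.map w) (by
      rw [le_principal_iff, Ultrafilter.coe_map, mem_map]
      exact univ_mem' fun i => by
        simpa [w] using (double_dual_bound ℝ X (z i)).trans (hz i))
  obtain ⟨y, hy⟩ := hJ (WeakDual.toStrongDual L)
  refine ⟨y, fun f => ?_⟩
  have := ((WeakDual.eval_continuous f).tendsto L).comp hL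
  rwa [← WeakDual.toStrongDual_apply L, ← hy] at this

theorem exists_strictMono_weakConvTo_of_surjective_inclusionInDoubleDual {x : ℕ → X} {C : ℝ}
    (hx : ∀ n, ‖x n‖ ≤ C) : ∃ φ : ℕ → ℕ, StrictMono φ ∧ ∃ y : X, WeakConvTo (x ∘ φ) y := by
  set Y := (Submodule.span ℝ (Set.range x)).topologicalClosure
  have hxY : ∀ n, x n ∈ Y := fun n =>
    Submodule.le_topologicalClosure _ (Submodule.subset_span (Set.mem_range_self n))
  have hYsep : TopologicalSpace.IsSeparable (Y : Set X) := by
    rw [Submodule.topologicalClosure_coe]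
    exact (Set.countable_range x).isSeparable.span.closure
  obtain ⟨g, hg⟩ := exists_seq_dual_eq_zero_of_isSeparable hYsep
  obtain ⟨ℓ, -, φ, hφ, hℓ⟩ := (isCompact_univ_pi fun k => isCompact_Icc).tendsto_subseq
    (x := fun n k => g k (x n)) fun n k _ => abs_le.1 <|
      ((g k).le_opNorm _).trans (mul_le_mul_of_nonneg_left (hx n) (norm_nonneg (g k)))
  have hlim : ∀ U : Ultrafilter ℕ, (U : Filter ℕ) ≤ atTop → ∀ w : X,
      (∀ f : StrongDual ℝ X, Tendsto (fun n => f (x (φ n))) U (𝓝 (f w))) →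
        w ∈ Y ∧ ∀ k, g k w = ℓ k := fun U hU w hw =>
    ⟨mem_of_forall_tendsto_apply_of_isClosed_of_convex
      (Submodule.isClosed_topologicalClosure _) Y.convex
      (Eventually.of_forall fun n => hxY _) hw,
    fun k => tendsto_nhds_unique (hw (g k)) ((tendsto_pi_nhds.1 hℓ k).mono_left hU)⟩
  obtain ⟨y, hy⟩ := exists_forall_tendsto_apply_of_surjective_inclusionInDoubleDual hJ
    (fun n => hx (φ n)) (Ultrafilter.of atTop)
  obtain ⟨hyY, hyℓ⟩ := hlim _ (Ultrafilter.of_le _) y hy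
  refine ⟨φ, hφ, y, fun f => (tendsto_iff_ultrafilter _ _ _).2 fun U hU => ?_⟩
  obtain ⟨w, hw⟩ := exists_forall_tendsto_apply_of_surjective_inclusionInDoubleDual hJ
    (fun n => hx (φ n)) U
  obtain ⟨hwY, hwℓ⟩ := hlim U hU w hw
  have hwy : w = y := sub_eq_zero.1 <| hg _ (Y.sub_mem hwY hyY) fun k => by
    rw [map_sub, hwℓ, hyℓ, sub_self]
  exact hwy ▸ hw f

theorem hasBanachSaks_of_surjective_inclusionInDoubleDual (h : HasWeakBanachSaks X) :
    HasBanachSaks X := by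
  rintro x ⟨C, hx⟩
  obtain ⟨φ, hφ, y, hy⟩ := exists_strictMono_weakConvTo_of_surjective_inclusionInDoubleDual hJ hx
  obtain ⟨ψ, hψ, z, hz⟩ := h _ y hy
  exact ⟨φ ∘ ψ, hφ.comp hψ, z, hz⟩

end Reflexive

theorem banachSaks_iff_reflexive_and_weakBanachSaks (X : Type*)
    [NormedAddCommGroup X] [NormedSpace ℝ X] [CompleteSpace X] :
    HasBanachSaks X ↔
      (Function.Surjective (NormedSpace.inclusionInDoubleDual ℝ X) ∧ HasWeakBanachSaks X) :=
  ⟨fun h => ⟨surjective_inclusionInDoubleDual_of_hasBanachSaks h, h.hasWeakBanachSaks⟩,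
    fun ⟨hJ, h⟩ => hasBanachSaks_of_surjective_inclusionInDoubleDual hJ h⟩
end

section
/- Every uniformly convex Banach space has the Banach-Saks property (Kakutani's theorem). -/
open Filter MeasureTheory Topology

/-!
Let `x` be a bounded sequence. Its closed span is separable, so countably many functionals `g j`
of norm at most one norm it, and a diagonal argument gives a subsequence along which every `g j`
converges. In a uniformly convex Banach space, norm-minimising sequences of nested bounded convex
sets are Cauchy, so the closed convex hulls of the tails of that subsequence have a common point
`u`; it is the limit along the subsequence of every `g j`, and `z = x - u` is weakly null for the
family.

Kakutani's pairing step: if `‖y‖, ‖y'‖ ≤ R` and `y'` lies far out in a weakly null sequence, then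
either `‖y‖ ≤ R / 2`, or some `g j` nearly norms `y` and nearly vanishes at `y'`, so that
`‖y - y'‖ ≥ 3R / 8`; either way `‖y + y'‖ ≤ θ R` for a fixed `θ < 2`. Pairing blocks level by level
yields a subsequence of `z` whose aligned dyadic blocks of length `2 ^ k` have sums of norm at most
`M θ ^ k`, hence Cesàro means of size `O((θ / 2) ^ log₂ k)`.
-/

open Set

section UniformConvex

variable {E : Type*} [NormedAddCommGroup E] [NormedSpace ℝ E] [UniformConvexSpace E]

theorem exists_forall_norm_add_le_two_sub_mul {ε : ℝ} (hε : 0 < ε) :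
    ∃ δ > 0, ∀ ⦃R : ℝ⦄ ⦃x y : E⦄, ‖x‖ ≤ R → ‖y‖ ≤ R → ε * R ≤ ‖x - y‖ →
      ‖x + y‖ ≤ (2 - δ) * R := by
  obtain ⟨δ, hδ, huc⟩ := exists_forall_closed_ball_dist_add_le_two_sub E hε
  refine ⟨δ, hδ, fun R x y hx hy hxy => ?_⟩
  rcases ((norm_nonneg x).trans hx).eq_or_lt with rfl | hR
  · simp_all
  have hR' : 0 ≤ R⁻¹ := inv_nonneg.2 hR.le
  rw [← div_le_one hR, div_eq_inv_mul, ← norm_smul_of_nonneg hR'] at hx hy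
  have := @huc _ hx _ hy
  simp_rw [← smul_add, ← smul_sub, norm_smul_of_nonneg hR', ← div_eq_inv_mul,
    le_div_iff₀ hR, div_le_iff₀ hR] at this
  exact this (by linarith)

theorem cauchySeq_of_tendsto_norm_of_le_norm_add {u : ℕ → E} {T : ℝ}
    (hT : Tendsto (fun n => ‖u n‖) atTop (𝓝 T))
    (hadd : ∀ η > 0, ∃ N, ∀ m ≥ N, ∀ n ≥ N, 2 * T - η ≤ ‖u m + u n‖) : CauchySeq u := by
  rcases (ge_of_tendsto' hT fun n => norm_nonneg (u n)).eq_or_lt with rfl | hT0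
  · exact (tendsto_zero_iff_norm_tendsto_zero.2 hT).cauchySeq
  rw [Metric.cauchySeq_iff]
  intro ρ hρ
  obtain ⟨δ, hδ, huc⟩ := exists_forall_norm_add_le_two_sub_mul (E := E) (ε := ρ / (2 * T))
    (by positivity)
  set η := min T (δ * T / 4)
  have hη : 0 < η := by positivity
  obtain ⟨N₁, hN₁⟩ :=
    eventually_atTop.1 (hT.eventually (eventually_le_nhds (lt_add_of_pos_right T hη)))
  obtain ⟨N₂, hN₂⟩ := hadd η hη
  refine ⟨max N₁ N₂, fun m hm n hn => ?_⟩
  rw [ge_iff_le, max_le_iff] at hm hn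
  by_contra! hρmn
  have hεR : ρ / (2 * T) * (T + η) ≤ ‖u m - u n‖ := by
    rw [← dist_eq_norm]
    refine le_trans ?_ hρmn
    rw [div_mul_eq_mul_div, div_le_iff₀ (by positivity)]
    nlinarith [min_le_left T (δ * T / 4)]
  have hsum := huc (hN₁ m hm.1) (hN₁ n hn.1) hεR
  have hmid := hN₂ m hm.2 n hn.2
  nlinarith [min_le_right T (δ * T / 4), mul_pos hδ hη]

theorem exists_mem_closure_of_antitone_convex [CompleteSpace E] {K : ℕ → Set E}
    (hK : Antitone K) (hconv : ∀ m, Convex ℝ (K m)) (hne : ∀ m, (K m).Nonempty)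
    (hbdd : Bornology.IsBounded (K 0)) : ∃ u, ∀ m, u ∈ closure (K m) := by
  set t : ℕ → ℝ := fun m => Metric.infDist 0 (K m)
  have ht_mono : Monotone t := fun m n h => Metric.infDist_le_infDist_of_subset (hK h) (hne n)
  obtain ⟨C, hC⟩ := hbdd.subset_closedBall 0
  have ht_bdd : BddAbove (range t) := by
    refine ⟨C, forall_mem_range.2 fun m => ?_⟩
    obtain ⟨v, hv⟩ := hne m
    exact (Metric.infDist_le_dist_of_mem hv).trans (dist_comm (0 : E) v ▸ hC (hK m.zero_le hv))
  have ht := tendsto_atTop_ciSup ht_mono ht_bdd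
  have happrox : ∀ m, ∃ v ∈ K m, ‖v‖ < t m + 1 / (m + 1) := fun m => by
    simpa only [dist_zero_left] using
      (Metric.infDist_lt_iff (hne m)).1 (lt_add_of_pos_right (t m) Nat.one_div_pos_of_nat)
  choose u hu hut using happrox
  have hnorm : Tendsto (fun n => ‖u n‖) atTop (𝓝 (⨆ m, t m)) := by
    refine tendsto_of_tendsto_of_tendsto_of_le_of_le ht ?_
      (fun n => by simpa only [dist_zero_left] using Metric.infDist_le_dist_of_mem (x := 0) (hu n))
      (fun n => (hut n).le)
    simpa using ht.add tendsto_one_div_add_atTop_nhds_zero_nat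
  have hadd : ∀ η > 0, ∃ N, ∀ m ≥ N, ∀ n ≥ N, 2 * (⨆ m, t m) - η ≤ ‖u m + u n‖ := by
    intro η hη
    obtain ⟨N, hN⟩ :=
      eventually_atTop.1 (ht.eventually (eventually_ge_nhds (sub_lt_self _ (half_pos hη))))
    refine ⟨N, fun m hm n hn => ?_⟩
    have hmid : (1 / 2 : ℝ) • u m + (1 / 2 : ℝ) • u n ∈ K N :=
      hconv N (hK hm (hu m)) (hK hn (hu n)) (by norm_num) (by norm_num) (by norm_num)
    have := Metric.infDist_le_dist_of_mem (x := 0) hmid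
    rw [dist_zero_left, ← smul_add, norm_smul_of_nonneg (by norm_num)] at this
    linarith [hN N le_rfl]
  obtain ⟨v, hv⟩ :=
    cauchySeq_tendsto_of_complete (cauchySeq_of_tendsto_norm_of_le_norm_add hnorm hadd)
  exact ⟨v, fun m => mem_closure_of_tendsto hv (eventually_atTop.2 ⟨m, fun n hn => hK hn (hu n)⟩)⟩

end UniformConvex

section WeakLimit

variable {E : Type*} [NormedAddCommGroup E] [NormedSpace ℝ E]

theorem ContinuousLinearMap.apply_eq_of_tendsto_of_mem_closure_convexHull
    {F : Type*} [NormedAddCommGroup F] [NormedSpace ℝ F] (f : E →L[ℝ] F) {w : ℕ → E} {c : F}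
    (hf : Tendsto (fun n => f (w n)) atTop (𝓝 c)) {u : E}
    (hu : ∀ m, u ∈ closure (convexHull ℝ (w '' Ici m))) : f u = c := by
  refine eq_of_forall_dist_le fun ε hε => ?_
  obtain ⟨m, hm⟩ := eventually_atTop.1 (hf.eventually (Metric.closedBall_mem_nhds c hε))
  have hsub : closure (convexHull ℝ (w '' Ici m)) ⊆ f ⁻¹' Metric.closedBall c ε :=
    closure_minimal (convexHull_min (image_subset_iff.2 hm)
      ((convex_closedBall c ε).linear_preimage f.toLinearMap))
      (Metric.isClosed_closedBall.preimage f.continuous)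
  exact hsub (hu m)

theorem TopologicalSpace.IsSeparable.exists_norming_seq {s : Set E} (hs : IsSeparable s) :
    ∃ g : ℕ → StrongDual ℝ E, (∀ j, ‖g j‖ ≤ 1) ∧ ∀ v ∈ s, ∀ ε > 0, ∃ j, ‖v‖ - ε ≤ g j v := by
  obtain ⟨c, hc, hsc⟩ := hs
  obtain ⟨w, hcw⟩ := countable_iff_exists_subset_range.1 hc
  choose g hg hgw using fun j => exists_dual_vector'' ℝ (w j)
  refine ⟨g, hg, fun v hv ε hε => ?_⟩
  obtain ⟨_, ⟨j, rfl⟩, hj⟩ :=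
    Metric.mem_closure_iff.1 (closure_mono hcw (hsc hv)) (ε / 2) (half_pos hε)
  refine ⟨j, ?_⟩
  have hgj : |g j (v - w j)| ≤ ‖v - w j‖ := by
    simpa using (g j).le_of_opNorm_le (hg j) (v - w j)
  have := norm_le_insert' v (w j)
  rw [dist_eq_norm] at hj
  rw [map_sub, hgw j, RCLike.ofReal_real_eq_id, id] at hgj
  linarith [(abs_le.1 hgj).1]

theorem exists_subseq_forall_tendsto_apply_of_bounded {w : ℕ → E} {C : ℝ} (hw : ∀ n, ‖w n‖ ≤ C)
    (g : ℕ → StrongDual ℝ E) :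
    ∃ ψ : ℕ → ℕ, StrictMono ψ ∧ ∀ j, ∃ c, Tendsto (fun n => g j (w (ψ n))) atTop (𝓝 c) := by
  have hmem : ∀ n, (fun j => g j (w n)) ∈ univ.pi fun j => Metric.closedBall 0 (‖g j‖ * C) :=
    fun n => mem_univ_pi.2 fun j => mem_closedBall_zero_iff.2 ((g j).le_opNorm_of_le (hw n))
  obtain ⟨c, -, ψ, hψ, hc⟩ :=
    (isCompact_univ_pi fun j => isCompact_closedBall _ _).tendsto_subseq hmem
  exact ⟨ψ, hψ, fun j => ⟨c j, tendsto_pi_nhds.1 hc j⟩⟩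

theorem exists_subseq_forall_tendsto_apply [UniformConvexSpace E] [CompleteSpace E]
    {w : ℕ → E} {C : ℝ} (hw : ∀ n, ‖w n‖ ≤ C) (g : ℕ → StrongDual ℝ E) :
    ∃ ψ : ℕ → ℕ, StrictMono ψ ∧ ∃ u ∈ closure (convexHull ℝ (range w)),
      ∀ j, Tendsto (fun n => g j (w (ψ n))) atTop (𝓝 (g j u)) := by
  obtain ⟨ψ, hψ, hc⟩ := exists_subseq_forall_tendsto_apply_of_bounded hw g
  choose c hc using hc
  have hsub (m : ℕ) : (w ∘ ψ) '' Ici m ⊆ range w :=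
    (image_subset_range _ _).trans (range_comp_subset_range ψ w)
  obtain ⟨u, hu⟩ := exists_mem_closure_of_antitone_convex
    (K := fun m => convexHull ℝ ((w ∘ ψ) '' Ici m))
    (fun m n h => convexHull_mono (image_mono (Ici_subset_Ici.2 h)))
    (fun m => convex_convexHull ℝ _) (fun m => (nonempty_Ici.image _).convexHull)
    (isBounded_convexHull.2
      ((isBounded_iff_forall_norm_le.2 ⟨C, forall_mem_range.2 hw⟩).subset (hsub 0)))
  refine ⟨ψ, hψ, u, closure_mono (convexHull_mono (hsub 0)) (hu 0), fun j => ?_⟩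
  rw [(g j).apply_eq_of_tendsto_of_mem_closure_convexHull (hc j) hu]
  exact hc j

theorem tendsto_cesaro_of_tendsto_cesaro_sub {w : ℕ → E} {u : E}
    (h : Tendsto (fun k : ℕ => (k : ℝ)⁻¹ • ∑ j ∈ Finset.range k, (w j - u)) atTop (𝓝 0)) :
    Tendsto (fun k : ℕ => (k : ℝ)⁻¹ • ∑ j ∈ Finset.range k, w j) atTop (𝓝 u) := by
  refine (zero_add u ▸ h.add_const u).congr' (eventually_atTop.2 ⟨1, fun k hk => ?_⟩)
  have hk : (k : ℝ) ≠ 0 := by positivity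
  rw [Finset.sum_sub_distrib, Finset.sum_const, Finset.card_range, ← Nat.cast_smul_eq_nsmul ℝ,
    smul_sub, smul_smul, inv_mul_cancel₀ hk, one_smul, sub_add_cancel]

end WeakLimit

section DyadicBlocks

variable {E : Type*} [SeminormedAddCommGroup E] (z : ℕ → E) (c : ℕ → ℝ)

/-- `b` enumerates a block of `2 ^ ℓ` indices; every aligned sub-block `b [i 2 ^ k, (i + 1) 2 ^ k)`
of it has `‖∑ z‖ ≤ c k`. -/
def DyadicSumsBounded : ℕ → (ℕ → ℕ) → Prop
  | 0, b => ‖z (b 0)‖ ≤ c 0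
  | ℓ + 1, b => ‖∑ t ∈ Finset.range (2 ^ (ℓ + 1)), z (b t)‖ ≤ c (ℓ + 1) ∧
      DyadicSumsBounded ℓ b ∧ DyadicSumsBounded ℓ (fun t => b (2 ^ ℓ + t))

def IsDyadicSubseq (ℓ : ℕ) (σ : ℕ → ℕ) : Prop :=
  StrictMono σ ∧ ∀ i, DyadicSumsBounded z c ℓ (fun t => σ (2 ^ ℓ * i + t))

variable {z c}

theorem DyadicSumsBounded.congr {ℓ : ℕ} {b₁ b₂ : ℕ → ℕ} (h : ∀ t < 2 ^ ℓ, b₁ t = b₂ t)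
    (hb : DyadicSumsBounded z c ℓ b₁) : DyadicSumsBounded z c ℓ b₂ := by
  induction ℓ generalizing b₁ b₂ with
  | zero => simpa [DyadicSumsBounded, h 0 one_pos] using hb
  | succ ℓ ih =>
    have h2 : ∀ t < 2 ^ ℓ, t < 2 ^ (ℓ + 1) ∧ 2 ^ ℓ + t < 2 ^ (ℓ + 1) := fun t ht => by
      constructor <;> rw [pow_succ] <;> omega
    obtain ⟨hsum, hleft, hright⟩ := hb
    refine ⟨?_, ih (fun t ht => h t (h2 t ht).1) hleft, ih (fun t ht => h _ (h2 t ht).2) hright⟩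
    rwa [← Finset.sum_congr rfl fun t ht => congrArg z (h t (Finset.mem_range.1 ht))]

theorem DyadicSumsBounded.norm_sum_le {ℓ : ℕ} {b : ℕ → ℕ} (hb : DyadicSumsBounded z c ℓ b) :
    ‖∑ t ∈ Finset.range (2 ^ ℓ), z (b t)‖ ≤ c ℓ := by
  cases ℓ with
  | zero => simpa [DyadicSumsBounded] using hb
  | succ ℓ => exact hb.1

theorem DyadicSumsBounded.succ {ℓ : ℕ} {b b₁ b₂ : ℕ → ℕ} (hb₁ : DyadicSumsBounded z c ℓ b₁)
    (hb₂ : DyadicSumsBounded z c ℓ b₂)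
    (hsum : ‖∑ t ∈ Finset.range (2 ^ ℓ), z (b₁ t) + ∑ t ∈ Finset.range (2 ^ ℓ), z (b₂ t)‖ ≤
      c (ℓ + 1))
    (h₁ : ∀ t < 2 ^ ℓ, b₁ t = b t) (h₂ : ∀ t < 2 ^ ℓ, b₂ t = b (2 ^ ℓ + t)) :
    DyadicSumsBounded z c (ℓ + 1) b := by
  refine ⟨?_, hb₁.congr h₁, hb₂.congr h₂⟩
  rwa [pow_succ, mul_two, Finset.sum_range_add,
    ← Finset.sum_congr rfl fun t ht => congrArg z (h₁ t (Finset.mem_range.1 ht)),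
    ← Finset.sum_congr rfl fun t ht => congrArg z (h₂ t (Finset.mem_range.1 ht))]

theorem DyadicSumsBounded.norm_sum_le_sum (hc₀ : 0 ≤ c 0) (hc : Monotone c) {ℓ : ℕ} {b : ℕ → ℕ}
    (hb : DyadicSumsBounded z c ℓ b) {k : ℕ} (hk : k ≤ 2 ^ ℓ) :
    ‖∑ t ∈ Finset.range k, z (b t)‖ ≤ ∑ j ∈ Finset.range (ℓ + 1), c j := by
  induction ℓ generalizing b k with
  | zero =>
    interval_cases k
    · simpa using hc₀
    · simpa [DyadicSumsBounded] using hb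
  | succ ℓ ih =>
    obtain ⟨-, hleft, hright⟩ := hb
    rw [Finset.sum_range_succ _ (ℓ + 1)]
    rcases le_or_gt k (2 ^ ℓ) with hk' | hk'
    · linarith [ih hleft hk', hc₀.trans (hc (ℓ + 1).zero_le)]
    · obtain ⟨m, rfl⟩ := Nat.exists_eq_add_of_le hk'.le
      rw [Finset.sum_range_add]
      have hm : m ≤ 2 ^ ℓ := by rw [pow_succ] at hk; omega
      calc _ ≤ ‖∑ t ∈ Finset.range (2 ^ ℓ), z (b t)‖ + ‖∑ t ∈ Finset.range m, z (b (2 ^ ℓ + t))‖ :=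
            norm_add_le _ _
        _ ≤ c ℓ + ∑ j ∈ Finset.range (ℓ + 1), c j := add_le_add hleft.norm_sum_le (ih hright hm)
        _ ≤ _ := by
          rw [Finset.sum_range_succ]
          linarith [hc ℓ.le_succ]

theorem tendsto_cesaro_zero_of_forall_dyadicSumsBounded [NormedSpace ℝ E] {b : ℕ → ℕ} {M θ : ℝ}
    (hM : 0 ≤ M) (hθ₁ : 1 < θ) (hθ₂ : θ < 2)
    (hb : ∀ ℓ, DyadicSumsBounded z (fun k => M * θ ^ k) ℓ b) :
    Tendsto (fun k : ℕ => (k : ℝ)⁻¹ • ∑ t ∈ Finset.range k, z (b t)) atTop (𝓝 0) := by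
  have hbound : ∀ k : ℕ, k ≠ 0 → ‖(k : ℝ)⁻¹ • ∑ t ∈ Finset.range k, z (b t)‖ ≤
      M * θ ^ 2 / (θ - 1) * (θ / 2) ^ Nat.log 2 k := by
    intro k hk
    set L := Nat.log 2 k
    have hkL : (2 : ℝ) ^ L ≤ k := by exact_mod_cast Nat.pow_log_le_self 2 hk
    have hsum := (hb (L + 1)).norm_sum_le_sum (by simpa using hM)
      (fun i j hij => by gcongr; linarith) (Nat.lt_pow_succ_log_self one_lt_two k).le
    rw [← Finset.mul_sum, geom_sum_eq hθ₁.ne'] at hsum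
    rw [norm_smul_of_nonneg (by positivity), div_pow, inv_mul_le_iff₀ (by positivity)]
    calc _ ≤ M * ((θ ^ (L + 1 + 1) - 1) / (θ - 1)) := hsum
      _ ≤ M * (θ ^ (L + 2) / (θ - 1)) := by gcongr; linarith
      _ = 2 ^ L * (M * θ ^ 2 / (θ - 1) * (θ ^ L / 2 ^ L)) := by field_simp; ring
      _ ≤ _ := by gcongr
  have hlog : Tendsto (Nat.log 2) atTop atTop :=
    Nat.log_monotone.tendsto_atTop_atTop fun n => ⟨2 ^ n, (Nat.log_pow one_lt_two n).ge⟩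
  refine squeeze_zero_norm' (eventually_atTop.2 ⟨1, fun k hk => hbound k (by omega)⟩) ?_
  have hpow : Tendsto (fun L : ℕ => (θ / 2) ^ L) atTop (𝓝 0) :=
    tendsto_pow_atTop_nhds_zero_of_lt_one (by positivity) (by linarith)
  simpa using (hpow.comp hlog).const_mul (M * θ ^ 2 / (θ - 1))

end DyadicBlocks

def blockReindex (N : ℕ) (e : ℕ → ℕ) (n : ℕ) : ℕ := N * e (n / N) + n % N

theorem blockReindex_mul_add {N t : ℕ} (e : ℕ → ℕ) (m : ℕ) (ht : t < N) :
    blockReindex N e (N * m + t) = N * e m + t := by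
  have hN : 0 < N := by omega
  rw [blockReindex, Nat.mul_add_div hN, Nat.div_eq_of_lt ht, add_zero, Nat.mul_add_mod,
    Nat.mod_eq_of_lt ht]

theorem strictMono_blockReindex {N : ℕ} (hN : 0 < N) {e : ℕ → ℕ} (he : StrictMono e) :
    StrictMono (blockReindex N e) := by
  intro n m hnm
  have hq := Nat.div_le_div_right (c := N) hnm.le
  rw [← Nat.div_add_mod n N, ← Nat.div_add_mod m N] at hnm ⊢
  rw [blockReindex_mul_add e _ (Nat.mod_lt n hN), blockReindex_mul_add e _ (Nat.mod_lt m hN)]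
  rcases hq.eq_or_lt with hq | hq
  · rw [hq] at hnm ⊢
    exact Nat.add_lt_add_left (Nat.lt_of_add_lt_add_left hnm) _
  · calc N * e (n / N) + n % N < N * (e (n / N) + 1) := by
          rw [mul_add, mul_one]; exact Nat.add_lt_add_left (Nat.mod_lt n hN) _
      _ ≤ N * e (m / N) := Nat.mul_le_mul_left N (he hq)
      _ ≤ _ := Nat.le_add_right _ _

theorem exists_strictMono_forall_rel_pairs {R : ℕ → ℕ → Prop} (h : ∀ p, ∃ q > p, R p q) :
    ∃ e : ℕ → ℕ, StrictMono e ∧ e 0 = 0 ∧ ∀ s, R (e (2 * s)) (e (2 * s + 1)) := by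
  choose f hf hR using h
  let e : ℕ → ℕ := fun n => Nat.rec (motive := fun _ => ℕ) 0
    (fun n en => if Even n then f en else en + 1) n
  have he : ∀ n, e (n + 1) = if Even n then f (e n) else e n + 1 := fun n => rfl
  refine ⟨e, strictMono_nat_of_lt_succ fun n => ?_, rfl, fun s => ?_⟩
  · rw [he]
    split_ifs
    exacts [hf _, Nat.lt_succ_self _]
  · rw [he, if_pos (even_two_mul s)]
    exact hR _

theorem exists_forall_eq_of_prefix_extension {α : Type*} {P : ℕ → (ℕ → α) → Prop}
    {σ₀ : ℕ → α} (h₀ : P 0 σ₀)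
    (hstep : ∀ ℓ σ, P ℓ σ → ∃ σ', P (ℓ + 1) σ' ∧ ∀ n < 2 ^ ℓ, σ' n = σ n) :
    ∃ φ : ℕ → α, ∀ ℓ, ∃ σ, P ℓ σ ∧ ∀ n < 2 ^ ℓ, φ n = σ n := by
  choose! F hF hF_eq using hstep
  let s : ℕ → ℕ → α := fun ℓ => Nat.rec (motive := fun _ => ℕ → α) σ₀ F ℓ
  have hs (ℓ : ℕ) : P ℓ (s ℓ) := by
    induction ℓ with
    | zero => exact h₀
    | succ ℓ ih => exact hF ℓ _ ih
  have hs_eq {ℓ L : ℕ} (hℓL : ℓ ≤ L) {n : ℕ} (hn : n < 2 ^ ℓ) : s L n = s ℓ n := by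
    induction L, hℓL using Nat.le_induction with
    | base => rfl
    | succ L hL ih =>
      exact (hF_eq L _ (hs L) n (hn.trans_le (Nat.pow_le_pow_right two_pos hL))).trans ih
  refine ⟨fun n => s n n, fun ℓ => ⟨s ℓ, hs ℓ, fun n hn => ?_⟩⟩
  rcases le_total n ℓ with h | h
  · exact (hs_eq h n.lt_two_pow_self).symm
  · exact hs_eq h hn

section Kakutani

variable {E : Type*} [NormedAddCommGroup E] [NormedSpace ℝ E]

theorem exists_gt_norm_add_le {θ R : ℝ} (hθ : 3 / 2 ≤ θ)
    (huc : ∀ x y : E, ‖x‖ ≤ R → ‖y‖ ≤ R → 3 / 8 * R ≤ ‖x - y‖ → ‖x + y‖ ≤ θ * R)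
    {g : ℕ → StrongDual ℝ E} (hg : ∀ j, ‖g j‖ ≤ 1) {y : ℕ → E} (hy : ∀ i, ‖y i‖ ≤ R) (p : ℕ)
    (hnorming : ∀ ε > 0, ∃ j, ‖y p‖ - ε ≤ g j (y p))
    (hweak : ∀ j, Tendsto (fun i => g j (y i)) atTop (𝓝 0)) :
    ∃ q > p, ‖y p + y q‖ ≤ θ * R := by
  rcases le_or_gt ‖y p‖ (R / 2) with hsmall | hlarge
  · refine ⟨p + 1, p.lt_succ_self, (norm_add_le _ _).trans ?_⟩
    nlinarith [hy (p + 1), (norm_nonneg (y p)).trans hsmall]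
  have hR : 0 < R := by linarith [norm_nonneg (y p), hy p]
  obtain ⟨j, hj⟩ := hnorming (R / 16) (by positivity)
  obtain ⟨N, hN⟩ := eventually_atTop.1
    ((hweak j).eventually (Metric.closedBall_mem_nhds 0 (by positivity : 0 < R / 16)))
  set q := max N (p + 1)
  have hgq : |g j (y q)| ≤ R / 16 := by simpa using hN q (le_max_left _ _)
  -- `g j` nearly norms `y p` but almost vanishes at `y q`, which keeps them apart.
  have hdist : 3 / 8 * R ≤ ‖y p - y q‖ := by
    have := (g j).le_of_opNorm_le (hg j) (y p - y q)
    rw [map_sub, Real.norm_eq_abs, one_mul] at this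
    linarith [le_abs_self (g j (y p) - g j (y q)), (abs_le.1 hgq).2]
  exact ⟨q, lt_of_lt_of_le p.lt_succ_self (le_max_right _ _), huc _ _ (hy p) (hy q) hdist⟩

theorem IsDyadicSubseq.exists_succ {z : ℕ → E} {M θ : ℝ} (hθ : 3 / 2 ≤ θ)
    (huc : ∀ R, ∀ x y : E, ‖x‖ ≤ R → ‖y‖ ≤ R → 3 / 8 * R ≤ ‖x - y‖ → ‖x + y‖ ≤ θ * R)
    {g : ℕ → StrongDual ℝ E} (hg : ∀ j, ‖g j‖ ≤ 1)
    (hnorming : ∀ v ∈ Submodule.span ℝ (range z), ∀ ε > 0, ∃ j, ‖v‖ - ε ≤ g j v)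
    (hweak : ∀ j, Tendsto (fun n => g j (z n)) atTop (𝓝 0)) {ℓ : ℕ} {σ : ℕ → ℕ}
    (hσ : IsDyadicSubseq z (fun k => M * θ ^ k) ℓ σ) :
    ∃ σ', IsDyadicSubseq z (fun k => M * θ ^ k) (ℓ + 1) σ' ∧ ∀ n < 2 ^ ℓ, σ' n = σ n := by
  obtain ⟨hmono, hblocks⟩ := hσ
  set y : ℕ → E := fun i => ∑ t ∈ Finset.range (2 ^ ℓ), z (σ (2 ^ ℓ * i + t))
  have hy_weak : ∀ j, Tendsto (fun i => g j (y i)) atTop (𝓝 0) := fun j => by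
    simp only [y, map_sum]
    simpa using tendsto_finsetSum (Finset.range (2 ^ ℓ)) fun t _ => (hweak j).comp
      (hmono.tendsto_atTop.comp (tendsto_atTop_mono (fun i =>
        (Nat.le_mul_of_pos_left i (by positivity)).trans (Nat.le_add_right _ t)) tendsto_id))
  have hpair (p : ℕ) : ∃ q > p, ‖y p + y q‖ ≤ θ * (M * θ ^ ℓ) :=
    exists_gt_norm_add_le hθ (huc _) hg (fun i => (hblocks i).norm_sum_le) p
      (hnorming _ (Submodule.sum_mem _ fun t _ => Submodule.subset_span (mem_range_self _)))
      hy_weak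
  obtain ⟨e, he, he0, he_pair⟩ := exists_strictMono_forall_rel_pairs hpair
  have hpos : 0 < 2 ^ ℓ := by positivity
  have hσe (m t : ℕ) (ht : t < 2 ^ ℓ) :
      σ (blockReindex (2 ^ ℓ) e (2 ^ ℓ * m + t)) = σ (2 ^ ℓ * e m + t) := by
    rw [blockReindex_mul_add e m ht]
  refine ⟨σ ∘ blockReindex (2 ^ ℓ) e, ⟨hmono.comp (strictMono_blockReindex hpos he), fun s => ?_⟩,
    fun n hn => ?_⟩
  · refine (hblocks (e (2 * s))).succ (hblocks (e (2 * s + 1)))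
      ((he_pair s).trans_eq (by ring)) (fun t ht => ?_) (fun t ht => ?_)
    · simp only [Function.comp_apply, pow_succ, mul_assoc, hσe _ _ ht]
    · rw [Function.comp_apply, ← add_assoc, pow_succ, mul_assoc, ← mul_add_one, hσe _ _ ht]
  · simp [blockReindex, Nat.div_eq_of_lt hn, he0, Nat.mod_eq_of_lt hn]

theorem exists_strictMono_tendsto_cesaro_zero [UniformConvexSpace E] {z : ℕ → E} {M : ℝ}
    (hz : ∀ n, ‖z n‖ ≤ M) {g : ℕ → StrongDual ℝ E} (hg : ∀ j, ‖g j‖ ≤ 1)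
    (hnorming : ∀ v ∈ Submodule.span ℝ (range z), ∀ ε > 0, ∃ j, ‖v‖ - ε ≤ g j v)
    (hweak : ∀ j, Tendsto (fun n => g j (z n)) atTop (𝓝 0)) :
    ∃ φ : ℕ → ℕ, StrictMono φ ∧
      Tendsto (fun k : ℕ => (k : ℝ)⁻¹ • ∑ t ∈ Finset.range k, z (φ t)) atTop (𝓝 0) := by
  obtain ⟨δ, hδ, huc⟩ := exists_forall_norm_add_le_two_sub_mul (E := E) (ε := 3 / 8) (by norm_num)
  set θ := max (3 / 2) (2 - δ)
  have huc' (R : ℝ) (x y : E) (hx : ‖x‖ ≤ R) (hy : ‖y‖ ≤ R) (hxy : 3 / 8 * R ≤ ‖x - y‖) :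
      ‖x + y‖ ≤ θ * R :=
    (huc hx hy hxy).trans (by gcongr; exacts [(norm_nonneg x).trans hx, le_max_right _ _])
  have hbase : IsDyadicSubseq z (fun k => M * θ ^ k) 0 id :=
    ⟨strictMono_id, fun i => by simpa [DyadicSumsBounded] using hz i⟩
  obtain ⟨φ, hφ⟩ := exists_forall_eq_of_prefix_extension hbase
    fun ℓ σ hσ => hσ.exists_succ (le_max_left _ _) huc' hg hnorming hweak
  refine ⟨φ, fun a b hab => ?_, tendsto_cesaro_zero_of_forall_dyadicSumsBounded (θ := θ)
    ((norm_nonneg _).trans (hz 0)) (lt_max_of_lt_left (by norm_num))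
    (max_lt (by norm_num) (by linarith)) fun ℓ => ?_⟩
  · obtain ⟨σ, hσ, hφσ⟩ := hφ b
    rw [hφσ a (hab.trans b.lt_two_pow_self), hφσ b b.lt_two_pow_self]
    exact hσ.1 hab
  · obtain ⟨σ, hσ, hφσ⟩ := hφ ℓ
    exact (hσ.2 0).congr fun t ht => by simp [hφσ t ht]

end Kakutani

theorem kakutani_banachSaks (X : Type*)
    [NormedAddCommGroup X] [NormedSpace ℝ X] [CompleteSpace X] [UniformConvexSpace X] :
    HasBanachSaks X := by
  rintro x ⟨C, hC⟩
  set Y := (Submodule.span ℝ (range x)).topologicalClosure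
  obtain ⟨g, hg, hnorming⟩ :=
    ((countable_range x).isSeparable.span (R := ℝ)).closure.exists_norming_seq
  obtain ⟨ψ, hψ, u, hu, hlim⟩ := exists_subseq_forall_tendsto_apply hC g
  have huY : u ∈ Y := closure_mono (convexHull_min Submodule.subset_span (Submodule.convex _)) hu
  have hzY : Submodule.span ℝ (range fun n => x (ψ n) - u) ≤ Y :=
    Submodule.span_le.2 <| range_subset_iff.2 fun n =>
      Y.sub_mem (Submodule.le_topologicalClosure _ (Submodule.subset_span (mem_range_self _))) huY
  obtain ⟨φ, hφ, hcesaro⟩ := exists_strictMono_tendsto_cesaro_zero (z := fun n => x (ψ n) - u)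
    (fun n => norm_sub_le_of_le (hC _) le_rfl) hg (fun v hv => hnorming v (hzY hv))
    fun j => by simpa using (hlim j).sub_const (g j u)
  exact ⟨ψ ∘ φ, hψ.comp hφ, u, tendsto_cesaro_of_tendsto_cesaro_sub hcesaro⟩
end

section
/- If X is a Banach space with the Banach-Saks property, then every bounded sequence in X contains a subsequence all of whose further subsequences have norm-convergent Cesàro means (i.e., are Banach-Saks sequences). -/
open Filter MeasureTheory Topology

/-!
Fix `ε > 0` and call a finite set `F ∪ H` a far split if `F < H`, `min F ≤ #F ≤ #H` and the
averages of `x` over `F` and over `H` differ by more than `ε`. By the Galvin–Nash-Williams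
dichotomy, every infinite `M ⊆ ℕ` contains an infinite `N` such that either no finite subset of
`N` is a far split, or every infinite subset of `N` begins with one. The second alternative is
impossible in a Banach-Saks space: along a subsequence with convergent Cesàro means, averages over
consecutive long blocks far out are all close to the limit. So averages over such blocks inside
`N` are `ε`-close. A fusion sequence through such sets for `ε = 1 / (k + 1)` is the required
subsequence: for any further subsequence, the Cesàro means are, up to a vanishing head, averages
over such blocks, hence form a Cauchy sequence.
-/

open Set
open scoped Finset

lemma Set.Infinite.inter_of_eventually {M S : Set ℕ} (hM : M.Infinite)
    (hS : ∀ᶠ n in atTop, n ∈ S) : (M ∩ S).Infinite :=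
  Nat.frequently_atTop_iff_infinite.1 <|
    (Nat.frequently_atTop_iff_infinite (p := (· ∈ M))).2 hM |>.and_eventually hS

theorem exists_strictMono_fusion {M : Set ℕ} (hM : M.Infinite)
    (R : Finset ℕ → Set ℕ → Prop)
    (hR : ∀ B N, ↑B ⊆ M → N ⊆ M → N.Infinite → ∃ N' ⊆ N, N'.Infinite ∧ R B N')
    (hR_anti : ∀ B N N', N' ⊆ N → R B N → R B N') :
    ∃ b : ℕ → ℕ, StrictMono b ∧ (∀ k, b k ∈ M) ∧
      ∀ k, R ((Finset.range k).image b) (b '' Ici k) := by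
  classical
  let State := {p : Finset ℕ × Set ℕ // ↑p.1 ⊆ M ∧ p.2 ⊆ M ∧ p.2.Infinite ∧ R p.1 p.2}
  have hnext (p : State) : ∃ q : State,
      q.1.1 = insert (sInf p.1.2) p.1.1 ∧ q.1.2 ⊆ p.1.2 ∩ Ioi (sInf p.1.2) := by
    obtain ⟨⟨B, N⟩, hB, hN, hNinf, -⟩ := p
    have hmin : sInf N ∈ M := hN (Nat.sInf_mem hNinf.nonempty)
    have hB' : ↑(insert (sInf N) B) ⊆ M := by
      rw [Finset.coe_insert]; exact insert_subset hmin hB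
    obtain ⟨N', hN'N, hN', hR'⟩ :=
      hR _ (N ∩ Ioi (sInf N)) hB' (inter_subset_left.trans hN)
        (hNinf.inter_of_eventually (eventually_gt_atTop _))
    exact ⟨⟨(_, N'), hB', hN'N.trans (inter_subset_left.trans hN), hN', hR'⟩, rfl, hN'N⟩
  choose next hnext_fst hnext_snd using hnext
  obtain ⟨N₀, hN₀M, hN₀, hR₀⟩ := hR ∅ M (by simp) subset_rfl hM
  let p : ℕ → State := fun k => next^[k] ⟨(∅, N₀), by simp, hN₀M, hN₀, hR₀⟩
  have hp_succ (k : ℕ) : p (k + 1) = next (p k) := Function.iterate_succ_apply' _ _ _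
  set b : ℕ → ℕ := fun k => sInf (p k).1.2
  have hb_mem (k : ℕ) : b k ∈ (p k).1.2 := Nat.sInf_mem (p k).2.2.2.1.nonempty
  have hp_step (k : ℕ) : (p (k + 1)).1.2 ⊆ (p k).1.2 ∩ Ioi (b k) := by
    rw [hp_succ]; exact hnext_snd _
  have hp_anti : Antitone fun k => (p k).1.2 :=
    antitone_nat_of_succ_le fun k => (hp_step k).trans inter_subset_left
  have hp_fst (k : ℕ) : (p k).1.1 = (Finset.range k).image b := by
    induction k with
    | zero => rfl
    | succ k ih => rw [hp_succ, hnext_fst, Finset.range_add_one, Finset.image_insert, ← ih]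
  refine ⟨b, strictMono_nat_of_lt_succ fun k => (hp_step k (hb_mem (k + 1))).2,
    fun k => (p k).2.2.1 (hb_mem k), fun k => ?_⟩
  rw [← hp_fst]
  refine hR_anti _ _ _ ?_ (p k).2.2.2.2
  rintro _ ⟨j, hj, rfl⟩
  exact hp_anti hj (hb_mem j)

lemma StrictMono.exists_subset_image_range {b : ℕ → ℕ} (hb : StrictMono b) {s : Finset ℕ}
    (hs : ↑s ⊆ range b) :
    ∃ k, s ⊆ (Finset.range k).image b ∧ ∀ j, (∀ a ∈ s, a < b j) → k ≤ j := by
  choose! idx hidx using fun a (ha : a ∈ s) => hs ha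
  refine ⟨s.sup (idx · + 1), fun a ha => ?_, fun j hj => ?_⟩
  · exact Finset.mem_image.2
      ⟨idx a, Finset.mem_range.2 (Finset.le_sup (f := (idx · + 1)) ha), hidx a ha⟩
  · by_contra! hjk
    obtain ⟨a, ha, hja⟩ := Finset.lt_sup_iff.1 hjk
    have := hj a ha
    rw [← hidx a ha] at this
    exact (hb.monotone (Nat.lt_succ_iff.1 hja)).not_gt this

namespace Galvin

def above (s : Finset ℕ) : Set ℕ := {n | ∀ a ∈ s, a < n}

lemma eventually_mem_above (s : Finset ℕ) : ∀ᶠ n in atTop, n ∈ above s :=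
  (Filter.eventually_all_finset s).2 fun a _ => eventually_gt_atTop a

def IsInitialSegment (t : Finset ℕ) (Y : Set ℕ) : Prop := ↑t ⊆ Y ∧ Y \ ↑t ⊆ above t

variable (P : Finset ℕ → Prop)

def HasInitialSegment (Y : Set ℕ) : Prop := ∃ t, IsInitialSegment t Y ∧ P t

/-- The combinatorial forcing of Nash-Williams and Galvin–Prikry. -/
def Accepts (M : Set ℕ) (s : Finset ℕ) : Prop :=
  ∀ X ⊆ M ∩ above s, X.Infinite → HasInitialSegment P (↑s ∪ X)

def Rejects (M : Set ℕ) (s : Finset ℕ) : Prop := ∀ N ⊆ M, N.Infinite → ¬ Accepts P N s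

def Decides (M : Set ℕ) (s : Finset ℕ) : Prop := Accepts P M s ∨ Rejects P M s

variable {P} {M N : Set ℕ} {s : Finset ℕ}

lemma Accepts.anti (h : N ⊆ M) (hM : Accepts P M s) : Accepts P N s :=
  fun X hX => hM X (hX.trans (inter_subset_inter_left _ h))

lemma Rejects.anti (h : N ⊆ M) (hM : Rejects P M s) : Rejects P N s :=
  fun N' hN' => hM N' (hN'.trans h)

lemma Decides.anti (h : N ⊆ M) (hM : Decides P M s) : Decides P N s :=
  hM.imp (Accepts.anti h) (Rejects.anti h)

lemma Decides.of_inter_above (h : Decides P (M ∩ above s) s) : Decides P M s :=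
  h.imp (fun hacc X hX => hacc X (by rwa [inter_assoc, inter_self]))
    fun hrej N hNM hN hacc => hrej (N ∩ above s) (inter_subset_inter_left _ hNM)
      (hN.inter_of_eventually (eventually_mem_above s)) (hacc.anti inter_subset_left)

lemma accepts_of_prop (hs : P s) (M : Set ℕ) : Accepts P M s :=
  fun _ hX _ => ⟨s, ⟨subset_union_left, fun _ hn => (hX (hn.1.resolve_left hn.2)).2⟩, hs⟩

lemma exists_decides (s : Finset ℕ) (hM : M.Infinite) :
    ∃ N ⊆ M, N.Infinite ∧ Decides P N s := by
  by_cases h : Rejects P M s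
  · exact ⟨M, subset_rfl, hM, Or.inr h⟩
  · simp only [Rejects, not_forall, not_not] at h
    obtain ⟨N, hNM, hN, hacc⟩ := h
    exact ⟨N, hNM, hN, Or.inl hacc⟩

lemma exists_decides_finset (T : Finset (Finset ℕ)) (hM : M.Infinite) :
    ∃ N ⊆ M, N.Infinite ∧ ∀ s ∈ T, Decides P N s := by
  classical
  induction T using Finset.induction_on with
  | empty => exact ⟨M, subset_rfl, hM, by simp⟩
  | insert s T _ ih =>
    obtain ⟨N, hNM, hN, hT⟩ := ih
    obtain ⟨N', hN'N, hN', hs⟩ := exists_decides (P := P) s hN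
    refine ⟨N', hN'N.trans hNM, hN', fun t ht => ?_⟩
    rcases Finset.mem_insert.1 ht with rfl | ht
    exacts [hs, (hT t ht).anti hN'N]

theorem exists_decides_all (hM : M.Infinite) :
    ∃ N ⊆ M, N.Infinite ∧ ∀ s : Finset ℕ, ↑s ⊆ N → Decides P N s := by
  obtain ⟨b, hb, hbM, hdec⟩ :=
    exists_strictMono_fusion hM (fun B N => ∀ s ⊆ B, Decides P N s)
      (fun B _ _ _ hN => by simpa using exists_decides_finset (P := P) B.powerset hN)
      (fun _ _ _ h hdec s hs => (hdec s hs).anti h)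
  refine ⟨range b, range_subset_iff.2 hbM, infinite_range_of_injective hb.injective,
    fun s hs => ?_⟩
  obtain ⟨k, hsk, hk⟩ := hb.exists_subset_image_range hs
  refine Decides.of_inter_above ((hdec k s hsk).anti ?_)
  rintro _ ⟨⟨j, rfl⟩, hj⟩
  exact mem_image_of_mem b (hk j hj)

lemma finite_accepts_insert {t : Finset ℕ} (hrej : Rejects P M t) :
    (M ∩ above t ∩ {n | Accepts P M (insert n t)}).Finite := by
  by_contra hinf
  refine hrej _ (inter_subset_left.trans inter_subset_left) hinf fun X hX hXinf => ?_
  -- `X` continues `insert (min X) t`, which `M` accepts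
  set n := sInf X
  have hn : n ∈ X := Nat.sInf_mem hXinf.nonempty
  have hX' : X \ {n} ⊆ M ∩ above (insert n t) := fun m hm =>
    ⟨(hX hm.1).1.1.1, Finset.forall_mem_insert _ _ _ |>.2
      ⟨lt_of_le_of_ne (Nat.sInf_le hm.1) (Ne.symm hm.2), (hX hm.1).2⟩⟩
  have := (hX hn).1.2 (X \ {n}) hX' (hXinf.sdiff (finite_singleton n))
  rwa [Finset.coe_insert, insert_union, ← union_insert, insert_sdiff_singleton,
    insert_eq_of_mem hn] at this

lemma eventually_rejects_insert (hdec : ∀ s : Finset ℕ, ↑s ⊆ M → Decides P M s)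
    {t : Finset ℕ} (ht : ↑t ⊆ M) (hrej : Rejects P M t) :
    ∀ᶠ n in atTop, n ∈ M → Rejects P M (insert n t) := by
  have hfin := (finite_accepts_insert hrej).eventually_cofinite_notMem
  rw [Nat.cofinite_eq_atTop] at hfin
  filter_upwards [hfin, eventually_mem_above t] with n hn hnt hnM
  refine (hdec _ (by rw [Finset.coe_insert]; exact insert_subset hnM ht)).resolve_left
    fun hacc => hn ⟨⟨hnM, hnt⟩, hacc⟩

lemma exists_rejects_insert_all (hdec : ∀ s : Finset ℕ, ↑s ⊆ M → Decides P M s)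
    {B : Finset ℕ} (hB : ↑B ⊆ M) (hNM : N ⊆ M) (hN : N.Infinite) :
    ∃ N' ⊆ N, N'.Infinite ∧ ∀ t ⊆ B, Rejects P M t → ∀ n ∈ N', Rejects P M (insert n t) := by
  have hev : ∀ᶠ n in atTop,
      ∀ t ∈ B.powerset, Rejects P M t → n ∈ M → Rejects P M (insert n t) := by
    refine (Filter.eventually_all_finset _).2 fun t ht => ?_
    by_cases hrej : Rejects P M t
    · have ht : ↑t ⊆ M := (Finset.coe_subset.2 (Finset.mem_powerset.1 ht)).trans hB
      filter_upwards [eventually_rejects_insert hdec ht hrej] with n hn using fun _ => hn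
    · exact .of_forall fun _ h => absurd h hrej
  exact ⟨_, inter_subset_left, hN.inter_of_eventually hev,
    fun t ht hrej n hn => hn.2 t (Finset.mem_powerset.2 ht) hrej (hNM hn.1)⟩

theorem exists_rejects_all (hdec : ∀ s : Finset ℕ, ↑s ⊆ M → Decides P M s)
    (hM : M.Infinite) (hrej : Rejects P M ∅) :
    ∃ N ⊆ M, N.Infinite ∧ ∀ s : Finset ℕ, ↑s ⊆ N → Rejects P M s := by
  obtain ⟨b, hb, hbM, hext⟩ := exists_strictMono_fusion hM
    (fun B N => ∀ t ⊆ B, Rejects P M t → ∀ n ∈ N, Rejects P M (insert n t))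
    (fun _ _ hB hNM hN => exists_rejects_insert_all hdec hB hNM hN)
    (fun _ _ _ h hext t ht hrej n hn => hext t ht hrej n (h hn))
  refine ⟨range b, range_subset_iff.2 hbM, infinite_range_of_injective hb.injective,
    fun s => s.induction_on_max (fun _ => hrej) fun n t htn ih hs => ?_⟩
  rw [Finset.coe_insert, insert_subset_iff] at hs
  obtain ⟨k, htk, hk⟩ := hb.exists_subset_image_range hs.2
  obtain ⟨j, rfl⟩ := hs.1
  exact hext k t htk (ih hs.2) (b j) (mem_image_of_mem b (hk j htn))

theorem exists_infinite_avoids_or_forces (P : Finset ℕ → Prop) (hM : M.Infinite) :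
    ∃ N ⊆ M, N.Infinite ∧ ((∀ t : Finset ℕ, ↑t ⊆ N → ¬ P t) ∨
      ∀ X ⊆ N, X.Infinite → HasInitialSegment P X) := by
  obtain ⟨N, hNM, hN, hdec⟩ := exists_decides_all (P := P) hM
  rcases hdec ∅ (by simp) with hacc | hrej
  · refine ⟨N, hNM, hN, Or.inr fun X hX hXinf => ?_⟩
    simpa using hacc X (by simpa [above] using hX) hXinf
  · obtain ⟨N', hN'N, hN', hrej'⟩ := exists_rejects_all hdec hN hrej
    refine ⟨N', hN'N.trans hNM, hN', Or.inl fun t ht hPt => ?_⟩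
    exact hrej' t ht (N ∩ above t) inter_subset_left
      (hN.inter_of_eventually (eventually_mem_above t)) (accepts_of_prop hPt _)

lemma IsInitialSegment.eq_image_Ico {g : ℕ → ℕ} (hg : StrictMono g) {t : Finset ℕ} {i : ℕ}
    (ht : IsInitialSegment t (g '' Ici i)) : t = (Finset.Ico i (i + #t)).image g := by
  have hcard : #((Finset.Ico i (i + #t)).image g) = #t := by
    rw [Finset.card_image_of_injective _ hg.injective, Nat.card_Ico, Nat.add_sub_cancel_left]
  refine (Finset.eq_of_subset_of_card_le (fun a ha => ?_) hcard.ge).symm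
  obtain ⟨j, hj, rfl⟩ := Finset.mem_image.1 ha
  rw [Finset.mem_Ico] at hj
  by_contra hgj
  -- all of `t` precedes `g j`, so `t` fits into the `j - i < #t` values `g '' [i, j)`
  have hsub : t ⊆ (Finset.Ico i j).image g := fun a ha => by
    obtain ⟨j', hj', rfl⟩ := ht.1 ha
    exact Finset.mem_image.2 ⟨j', Finset.mem_Ico.2
      ⟨hj', hg.lt_iff_lt.1 (ht.2 ⟨⟨j, hj.1, rfl⟩, hgj⟩ _ ha)⟩, rfl⟩
  have := Finset.card_le_card hsub
  rw [Finset.card_image_of_injective _ hg.injective, Nat.card_Ico] at this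
  omega

lemma IsInitialSegment.of_union_left {F H : Finset ℕ} {Y : Set ℕ}
    (ht : IsInitialSegment (F ∪ H) Y) (hFH : ∀ a ∈ F, ∀ b ∈ H, a < b) :
    IsInitialSegment F Y := by
  refine ⟨fun a ha => ht.1 (Finset.mem_union_left H ha), fun y hy a ha => ?_⟩
  by_cases hyH : y ∈ H
  · exact hFH a ha y hyH
  · exact ht.2 ⟨hy.1, by simpa [hyH] using hy.2⟩ a (Finset.mem_union_left H ha)

lemma IsInitialSegment.eq_image_Ico_of_union {g : ℕ → ℕ} (hg : StrictMono g) {F H : Finset ℕ}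
    {i : ℕ} (ht : IsInitialSegment (F ∪ H) (g '' Ici i)) (hFH : ∀ a ∈ F, ∀ b ∈ H, a < b) :
    F = (Finset.Ico i (i + #F)).image g ∧
      H = (Finset.Ico (i + #F) (i + #F + #H)).image g := by
  have hF := (ht.of_union_left hFH).eq_image_Ico hg
  have hdisj : Disjoint F H := Finset.disjoint_left.2 fun a haF haH => (hFH a haF a haH).false
  have hU := ht.eq_image_Ico hg
  rw [Finset.card_union_of_disjoint hdisj, ← add_assoc] at hU
  refine ⟨hF, ?_⟩
  calc H = (F ∪ H) \ F := (Finset.union_sdiff_cancel_left hdisj).symm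
    _ = (Finset.Ico i (i + #F + #H)).image g \ (Finset.Ico i (i + #F)).image g := by
      rw [← hU, ← hF]
    _ = _ := by
      rw [← Finset.image_sdiff _ _ hg.injective, Finset.Ico_sdiff_Ico_left,
        max_eq_right (Nat.le_add_right _ _)]

end Galvin

open Galvin

namespace BanachSaks

variable {E : Type*} [NormedAddCommGroup E] [NormedSpace ℝ E]

noncomputable def avg (x : ℕ → E) (F : Finset ℕ) : E := (#F : ℝ)⁻¹ • ∑ a ∈ F, x a

lemma avg_range (x : ℕ → E) (k : ℕ) :
    avg x (Finset.range k) = (k : ℝ)⁻¹ • ∑ j ∈ Finset.range k, x j := by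
  rw [avg, Finset.card_range]

lemma avg_image {g : ℕ → ℕ} (hg : Function.Injective g) (x : ℕ → E) (F : Finset ℕ) :
    avg x (F.image g) = avg (x ∘ g) F := by
  rw [avg, avg, Finset.card_image_of_injective _ hg, Finset.sum_image hg.injOn]; rfl

lemma card_smul_avg (x : ℕ → E) (F : Finset ℕ) : (#F : ℝ) • avg x F = ∑ a ∈ F, x a := by
  rcases F.eq_empty_or_nonempty with rfl | hF
  · simp
  · rw [avg, smul_smul, mul_inv_cancel₀ (by exact_mod_cast hF.card_pos.ne'), one_smul]

lemma norm_avg_le {x : ℕ → E} {C : ℝ} (hC : ∀ n, ‖x n‖ ≤ C) (F : Finset ℕ) :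
    ‖avg x F‖ ≤ C := by
  rcases F.eq_empty_or_nonempty with rfl | hF
  · simpa [avg] using (norm_nonneg _).trans (hC 0)
  · have hpos : (0 : ℝ) < #F := by exact_mod_cast hF.card_pos
    rw [avg, norm_smul, norm_inv, Real.norm_natCast, inv_mul_le_iff₀ hpos]
    calc ‖∑ a ∈ F, x a‖ ≤ ∑ a ∈ F, ‖x a‖ := norm_sum_le _ _
      _ ≤ #F * C := by simpa using Finset.sum_le_sum fun a _ => hC a

lemma eventually_norm_avg_Ico_sub_le {z : ℕ → E} {y : E}
    (hz : Tendsto (fun t => avg z (Finset.range t)) atTop (𝓝 y)) {δ : ℝ} (hδ : 0 < δ) :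
    ∀ᶠ a in atTop, ∀ b, a ≤ 2 * b → ‖avg z (Finset.Ico a (a + b)) - y‖ ≤ δ := by
  obtain ⟨T, hT⟩ := eventually_atTop.1 <|
    hz.eventually (Metric.closedBall_mem_nhds y (by positivity : 0 < δ / 5))
  filter_upwards [eventually_ge_atTop (max T 1)] with a ha b hab
  set A := fun t => avg z (Finset.range t)
  have hA (t : ℕ) (ht : T ≤ t) : ‖A t - y‖ ≤ δ / 5 := by
    simpa [dist_eq_norm] using hT t ht
  have hb : (0 : ℝ) < b := by exact_mod_cast (show 0 < b by omega)
  have hab' : (a : ℝ) ≤ 2 * b := by exact_mod_cast hab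
  have hblock : avg z (Finset.Ico a (a + b)) - y =
      (b : ℝ)⁻¹ • (((a + b : ℕ) : ℝ) • (A (a + b) - y) - (a : ℝ) • (A a - y)) := by
    have hS (t : ℕ) : ∑ j ∈ Finset.range t, z j = (t : ℝ) • A t := by
      simpa using (card_smul_avg z (Finset.range t)).symm
    rw [avg, Nat.card_Ico, Nat.add_sub_cancel_left,
      Finset.sum_Ico_eq_sub _ (Nat.le_add_right a b), hS, hS,
      show ((a + b : ℕ) : ℝ) • (A (a + b) - y) - (a : ℝ) • (A a - y) =
        ((a + b : ℕ) : ℝ) • A (a + b) - (a : ℝ) • A a - (b : ℝ) • y by push_cast; module,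
      smul_sub _ _ ((b : ℝ) • y), smul_smul, inv_mul_cancel₀ hb.ne', one_smul]
  rw [hblock, norm_smul, norm_inv, Real.norm_natCast, inv_mul_le_iff₀ hb]
  calc ‖((a + b : ℕ) : ℝ) • (A (a + b) - y) - (a : ℝ) • (A a - y)‖
      ≤ ((a + b : ℕ) : ℝ) * (δ / 5) + a * (δ / 5) := by
        refine (norm_sub_le _ _).trans (add_le_add ?_ ?_) <;>
          rw [norm_smul, Real.norm_natCast] <;> gcongr <;> exact hA _ (by omega)
    _ ≤ b * δ := by push_cast; nlinarith

section Stability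

/-- Requiring `min F ≤ #F` makes a block of a subsequence that starts at position `i` have
length at least `i`, so that its average follows the Cesàro means. -/
def IsAdmissiblePair (F H : Finset ℕ) : Prop :=
  (∃ a ∈ F, a ≤ #F) ∧ #F ≤ #H ∧ ∀ a ∈ F, ∀ b ∈ H, a < b

def IsAvgStable (x : ℕ → E) (ε : ℝ) (N : Set ℕ) : Prop :=
  ∀ F H : Finset ℕ, ↑F ⊆ N → ↑H ⊆ N → IsAdmissiblePair F H → ‖avg x F - avg x H‖ ≤ ε

def HasFarSplit (x : ℕ → E) (ε : ℝ) (t : Finset ℕ) : Prop :=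
  ∃ F H : Finset ℕ, t = F ∪ H ∧ IsAdmissiblePair F H ∧ ε < ‖avg x F - avg x H‖

variable {x : ℕ → E} {ε : ℝ} {N N' : Set ℕ}

lemma IsAvgStable.anti (h : N' ⊆ N) (hN : IsAvgStable x ε N) : IsAvgStable x ε N' :=
  fun F H hF hH => hN F H (hF.trans h) (hH.trans h)

lemma IsAvgStable.mono {ε' : ℝ} (h : ε ≤ ε') (hN : IsAvgStable x ε N) : IsAvgStable x ε' N :=
  fun F H hF hH hFH => (hN F H hF hH hFH).trans h

lemma isAvgStable_of_forall_not_hasFarSplit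
    (h : ∀ t : Finset ℕ, ↑t ⊆ N → ¬ HasFarSplit x ε t) : IsAvgStable x ε N :=
  fun F H hF hH hFH => not_lt.1 fun hfar =>
    h (F ∪ H) (by rw [Finset.coe_union]; exact union_subset hF hH) ⟨F, H, rfl, hFH, hfar⟩

/-- Compare both blocks with a common long block beyond them. -/
lemma IsAvgStable.norm_avg_sub_avg_le (hS : IsAvgStable x ε N) (hN : N.Infinite)
    {F F' : Finset ℕ} (hF : ↑F ⊆ N) (hF' : ↑F' ⊆ N) (hFa : ∃ a ∈ F, a ≤ #F)
    (hF'a : ∃ a ∈ F', a ≤ #F') : ‖avg x F - avg x F'‖ ≤ 2 * ε := by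
  obtain ⟨H, hHN, hH⟩ := (hN.inter_of_eventually (eventually_gt_atTop ((F ∪ F').sup id))
    ).exists_subset_card_eq (max #F #F')
  have hlt (G : Finset ℕ) (hG : G ⊆ F ∪ F') : ∀ a ∈ G, ∀ b ∈ H, a < b := fun a ha b hb =>
    (Finset.le_sup (f := id) (hG ha)).trans_lt (hHN hb).2
  have h1 := hS F H hF (hHN.trans inter_subset_left)
    ⟨hFa, hH ▸ le_max_left _ _, hlt F Finset.subset_union_left⟩
  have h2 := hS F' H hF' (hHN.trans inter_subset_left)
    ⟨hF'a, hH ▸ le_max_right _ _, hlt F' Finset.subset_union_right⟩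
  calc ‖avg x F - avg x F'‖ ≤ ‖avg x F - avg x H‖ + ‖avg x F' - avg x H‖ := by
        simpa only [dist_eq_norm] using dist_triangle_right (avg x F) (avg x F') (avg x H)
    _ ≤ 2 * ε := by linarith

end Stability

/-- Along a subsequence with convergent Cesàro means, both blocks of a far split that starts
late are close to the limit. -/
theorem not_forall_hasInitialSegment_hasFarSplit (hBS : HasBanachSaks E) {x : ℕ → E}
    (hx : ∃ C : ℝ, ∀ n, ‖x n‖ ≤ C) {ε : ℝ} (hε : 0 < ε) {N : Set ℕ} (hN : N.Infinite) :
    ¬ ∀ X ⊆ N, X.Infinite → HasInitialSegment (HasFarSplit x ε) X := by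
  intro hforce
  have he : StrictMono (Nat.nth (· ∈ N)) := Nat.nth_strictMono hN
  obtain ⟨C, hC⟩ := hx
  obtain ⟨σ, hσ, y, hy⟩ := hBS (x ∘ Nat.nth (· ∈ N)) ⟨C, fun n => hC _⟩
  set ν := Nat.nth (· ∈ N) ∘ σ
  have hν : StrictMono ν := he.comp hσ
  have hy' : Tendsto (fun k => avg (x ∘ ν) (Finset.range k)) atTop (𝓝 y) := by
    simp only [avg_range]; exact hy
  obtain ⟨i, hi⟩ := (eventually_norm_avg_Ico_sub_le hy' (half_pos hε)).exists_forall_of_atTop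
  obtain ⟨t, ht, F, H, rfl, ⟨⟨a, haF, haF'⟩, hFH, hlt⟩, hfar⟩ := hforce (ν '' Ici i)
    (by rintro _ ⟨j, -, rfl⟩; exact Nat.nth_mem_of_infinite hN _)
    ((Ici_infinite i).image hν.injective.injOn)
  obtain ⟨hF, hH⟩ := ht.eq_image_Ico_of_union hν hlt
  have hik : i ≤ #F := by
    rw [hF, Finset.mem_image] at haF
    obtain ⟨j, hj, rfl⟩ := haF
    exact ((Finset.mem_Ico.1 hj).1.trans (hν.id_le j)).trans haF'
  rw [hF, hH, avg_image hν.injective, avg_image hν.injective] at hfar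
  have h1 := hi i le_rfl #F (by omega)
  have h2 := hi (i + #F) (by omega) #H (by omega)
  have := dist_triangle_right (avg (x ∘ ν) (Finset.Ico i (i + #F)))
    (avg (x ∘ ν) (Finset.Ico (i + #F) (i + #F + #H))) y
  rw [dist_eq_norm, dist_eq_norm, dist_eq_norm] at this
  linarith

theorem exists_isAvgStable (hBS : HasBanachSaks E) {x : ℕ → E} (hx : ∃ C : ℝ, ∀ n, ‖x n‖ ≤ C)
    {ε : ℝ} (hε : 0 < ε) {M : Set ℕ} (hM : M.Infinite) :
    ∃ N ⊆ M, N.Infinite ∧ IsAvgStable x ε N := by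
  obtain ⟨N, hNM, hN, havoid | hforce⟩ := exists_infinite_avoids_or_forces (HasFarSplit x ε) hM
  · exact ⟨N, hNM, hN, isAvgStable_of_forall_not_hasFarSplit havoid⟩
  · exact (not_forall_hasInitialSegment_hasFarSplit hBS hx hε hN hforce).elim

lemma tendsto_avg_range_sub_avg_Ico {x : ℕ → E} {C : ℝ} (hC : ∀ n, ‖x n‖ ≤ C) (i : ℕ) :
    Tendsto (fun k => avg x (Finset.range k) - avg x (Finset.Ico i k)) atTop (𝓝 0) := by
  refine squeeze_zero_norm' ?_
    (tendsto_const_div_atTop_nhds_zero_nat (‖∑ j ∈ Finset.range i, x j‖ + i * C))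
  filter_upwards [eventually_ge_atTop (i + 1)] with k hk
  have hk0 : (0 : ℝ) < k := by exact_mod_cast (Nat.zero_lt_of_lt hk)
  have hsplit : avg x (Finset.range k) - avg x (Finset.Ico i k) =
      (k : ℝ)⁻¹ • (∑ j ∈ Finset.range i, x j - (i : ℝ) • avg x (Finset.Ico i k)) := by
    rw [avg_range, ← Finset.sum_range_add_sum_Ico _ (Nat.le_of_succ_le hk),
      ← card_smul_avg x (Finset.Ico i k), Nat.card_Ico, Nat.cast_sub (Nat.le_of_succ_le hk),
      smul_add, smul_sub, smul_smul, smul_smul, mul_sub, inv_mul_cancel₀ hk0.ne', sub_smul,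
      one_smul]
    abel
  rw [hsplit, norm_smul, norm_inv, Real.norm_natCast, inv_mul_eq_div]
  gcongr
  refine (norm_sub_le _ _).trans (add_le_add le_rfl ?_)
  rw [norm_smul, Real.norm_natCast]
  exact mul_le_mul_of_nonneg_left (norm_avg_le hC _) (Nat.cast_nonneg i)

theorem cauchySeq_avg_range_of_isAvgStable {x : ℕ → E} {C : ℝ} (hC : ∀ n, ‖x n‖ ≤ C)
    {g : ℕ → ℕ} (hg : StrictMono g) (h : ∀ ε > 0, ∃ i, IsAvgStable x ε (g '' Ici i)) :
    CauchySeq fun k => avg (x ∘ g) (Finset.range k) := by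
  rw [Metric.cauchySeq_iff]
  intro ε hε
  obtain ⟨i, hi⟩ := h (ε / 4) (by positivity)
  have hhead := (tendsto_avg_range_sub_avg_Ico (x := x ∘ g) (fun n => hC _) i).eventually
    (Metric.ball_mem_nhds 0 (by positivity : 0 < ε / 4))
  obtain ⟨K, hK⟩ := eventually_atTop.1 (hhead.and (eventually_gt_atTop (i + g i)))
  have hblock (m : ℕ) (hm : i + g i < m) : ↑((Finset.Ico i m).image g) ⊆ g '' Ici i ∧
      ∃ a ∈ (Finset.Ico i m).image g, a ≤ #((Finset.Ico i m).image g) := by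
    refine ⟨by rw [Finset.coe_image, Finset.coe_Ico]; exact image_mono Ico_subset_Ici_self,
      g i, Finset.mem_image_of_mem g (Finset.mem_Ico.2 ⟨le_rfl, by omega⟩), ?_⟩
    rw [Finset.card_image_of_injective _ hg.injective, Nat.card_Ico]
    omega
  refine ⟨K, fun k hk l hl => ?_⟩
  obtain ⟨hk₁, hk₂⟩ := hK k hk
  obtain ⟨hl₁, hl₂⟩ := hK l hl
  have hkl := hi.norm_avg_sub_avg_le ((Ici_infinite i).image hg.injective.injOn)
    (hblock k hk₂).1 (hblock l hl₂).1 (hblock k hk₂).2 (hblock l hl₂).2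
  rw [avg_image hg.injective, avg_image hg.injective] at hkl
  rw [dist_zero_right, ← dist_eq_norm] at hk₁ hl₁
  rw [← dist_eq_norm] at hkl
  linarith [dist_triangle4 (avg (x ∘ g) (Finset.range k)) (avg (x ∘ g) (Finset.Ico i k))
    (avg (x ∘ g) (Finset.Ico i l)) (avg (x ∘ g) (Finset.range l)),
    dist_comm (avg (x ∘ g) (Finset.Ico i l)) (avg (x ∘ g) (Finset.range l))]

end BanachSaks

open BanachSaks

theorem ramsey_banachSaks (X : Type*)
    [NormedAddCommGroup X] [NormedSpace ℝ X] [CompleteSpace X]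
    (h : HasBanachSaks X) (x : ℕ → X) (hb : ∃ C : ℝ, ∀ n, ‖x n‖ ≤ C) :
    ∃ φ : ℕ → ℕ, StrictMono φ ∧ ∀ ψ : ℕ → ℕ, StrictMono ψ → ∃ y : X,
      Tendsto (fun k : ℕ => (k : ℝ)⁻¹ • ∑ j ∈ Finset.range k, x (φ (ψ j))) atTop (𝓝 y) := by
  obtain ⟨φ, hφ, -, hφS⟩ := exists_strictMono_fusion infinite_univ
    (fun B N => IsAvgStable x (#B + 1 : ℝ)⁻¹ N)
    (fun _ _ _ _ hN => exists_isAvgStable h hb (by positivity) hN)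
    (fun _ _ _ hN'N hS => hS.anti hN'N)
  refine ⟨φ, hφ, fun ψ hψ => ?_⟩
  obtain ⟨C, hC⟩ := hb
  have hcauchy := cauchySeq_avg_range_of_isAvgStable hC (hφ.comp hψ) fun ε hε => by
    obtain ⟨i, hi⟩ := exists_nat_one_div_lt hε
    refine ⟨i, ((hφS i).anti ?_).mono ?_⟩
    · rintro _ ⟨j, hj, rfl⟩
      exact mem_image_of_mem φ ((mem_Ici.1 hj).trans (hψ.id_le j))
    · rw [Finset.card_image_of_injective _ hφ.injective, Finset.card_range, ← one_div]
      exact hi.le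
  obtain ⟨y, hy⟩ := cauchySeq_tendsto_of_complete hcauchy
  simp only [avg_range] at hy
  exact ⟨y, hy⟩
end
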